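/- arXiv:2504.20060 — 5 statements merged into one kernel-verified Lean document; each statement's English description precedes it below -/
import Mathlib

section
/- For the interior black hole metric, the Ricci tensor satisfies S_{11} = -(ξ''/t) g_{11}, S_{22} = -(ξ''/t) g_{22}, S_{33} = -(2ξ'/t²) g_{33}, S_{44} = -(2ξ'/t²) g_{44}, and all off-diagonal components vanish; i.e., S is diagonal with exactly two distinct eigenvalue functions -ξ''/t and -2ξ'/t² (relative to g). -/
noncomputable section
open Real

abbrev Pt : Type := Fin 4 → ℝ

/-- Partial derivative of `f` in the `i`-th coordinate direction at `x`. -/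
def pd (i : Fin 4) (f : Pt → ℝ) (x : Pt) : ℝ :=
  deriv (fun s => f (Function.update x i s)) (x i)

/-- The interior black hole metric components in coordinates `(t,z,θ,φ)`. -/
def gM (ξ : ℝ → ℝ) (x : Pt) : Fin 4 → Fin 4 → ℝ := fun i j =>
  if i = j then
    (![-(2 * ξ (x 0) / x 0 - 1)⁻¹, 2 * ξ (x 0) / x 0 - 1,
       (x 0) ^ 2, (x 0) ^ 2 * Real.sin (x 2) ^ 2] : Fin 4 → ℝ) i
  else 0

/-- Inverse metric. -/
def gInv (ξ : ℝ → ℝ) (x : Pt) : Fin 4 → Fin 4 → ℝ := fun i j =>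
  (Matrix.of (gM ξ x))⁻¹ i j

/-- Christoffel symbols of the second kind `Γ^h_{ij}`. -/
def Chr (ξ : ℝ → ℝ) (x : Pt) (h i j : Fin 4) : ℝ :=
  (1 / 2) * ∑ k : Fin 4, gInv ξ x h k *
    (pd i (fun y => gM ξ y j k) x + pd j (fun y => gM ξ y i k) x
      - pd k (fun y => gM ξ y i j) x)

/-- (1,3) Riemann curvature `R^a_{qrs}`. -/
def Riem13 (ξ : ℝ → ℝ) (x : Pt) (a q r s : Fin 4) : ℝ :=
  pd s (fun y => Chr ξ y a q r) x - pd r (fun y => Chr ξ y a q s) x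
    + ∑ b : Fin 4, (Chr ξ x b q r * Chr ξ x a b s - Chr ξ x b q s * Chr ξ x a b r)

/-- (0,4) Riemann curvature `R_{pqrs}`. -/
def Riem04 (ξ : ℝ → ℝ) (x : Pt) (p q r s : Fin 4) : ℝ :=
  ∑ a : Fin 4, gM ξ x p a * Riem13 ξ x a q r s

/-- Ricci tensor `S_{ij} = R^k_{ikj}`. -/
def Ric (ξ : ℝ → ℝ) (x : Pt) (i j : Fin 4) : ℝ :=
  ∑ k : Fin 4, Riem13 ξ x k i k j

/-- Scalar curvature `κ = g^{ij} S_{ij}`. -/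
def scal (ξ : ℝ → ℝ) (x : Pt) : ℝ :=
  ∑ i : Fin 4, ∑ j : Fin 4, gInv ξ x i j * Ric ξ x i j

/-- Kulkarni–Nomizu product of two symmetric (0,2)-tensors at a point. -/
def KN (H F : Fin 4 → Fin 4 → ℝ) (a b c d : Fin 4) : ℝ :=
  H a c * F b d + H b d * F a c - H a d * F b c - H b c * F a d

/-- (0,4) conformal (Weyl) curvature tensor in dimension 4. -/
def Weyl04 (ξ : ℝ → ℝ) (x : Pt) (a b c d : Fin 4) : ℝ :=
  Riem04 ξ x a b c d - (1 / 2) * KN (gM ξ x) (Ric ξ x) a b c d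
    + (scal ξ x / 12) * KN (gM ξ x) (gM ξ x) a b c d

/-- (1,3) Weyl tensor. -/
def Weyl13 (ξ : ℝ → ℝ) (x : Pt) (a q r s : Fin 4) : ℝ :=
  ∑ p : Fin 4, gInv ξ x a p * Weyl04 ξ x p q r s

/-- (0,4) conharmonic curvature tensor in dimension 4. -/
def Conh04 (ξ : ℝ → ℝ) (x : Pt) (a b c d : Fin 4) : ℝ :=
  Riem04 ξ x a b c d - (1 / 2) * KN (gM ξ x) (Ric ξ x) a b c d

/-- (1,3) conharmonic tensor. -/
def Conh13 (ξ : ℝ → ℝ) (x : Pt) (a q r s : Fin 4) : ℝ :=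
  ∑ p : Fin 4, gInv ξ x a p * Conh04 ξ x p q r s

/-- Action `A · U` of a (1,3)-curvature operator `A` on a (0,4)-tensor `U`. -/
def dotR (A U : Fin 4 → Fin 4 → Fin 4 → Fin 4 → ℝ) (a b c d e f : Fin 4) : ℝ :=
  -(∑ α : Fin 4, (A α e f a * U α b c d + A α e f b * U a α c d
      + A α e f c * U a b α d + A α e f d * U a b c α))

/-- Action `A · T` of a (1,3)-curvature operator `A` on a (0,2)-tensor `T`. -/
def dot2 (A : Fin 4 → Fin 4 → Fin 4 → Fin 4 → ℝ) (T : Fin 4 → Fin 4 → ℝ)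
    (a b e f : Fin 4) : ℝ :=
  -(∑ α : Fin 4, (A α e f a * T α b + A α e f b * T a α))

/-- Tachibana tensor `Q(P,U)` for a (0,4)-tensor `U`. -/
def Tach (P : Fin 4 → Fin 4 → ℝ) (U : Fin 4 → Fin 4 → Fin 4 → Fin 4 → ℝ)
    (a b c d e f : Fin 4) : ℝ :=
  P f a * U e b c d + P f b * U a e c d + P f c * U a b e d + P f d * U a b c e
    - P e a * U f b c d - P e b * U a f c d - P e c * U a b f d - P e d * U a b c f

/-- Tachibana tensor `Q(P,T)` for a (0,2)-tensor `T`. -/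
def Tach2 (P T : Fin 4 → Fin 4 → ℝ) (a b e f : Fin 4) : ℝ :=
  P f a * T e b + P f b * T a e - P e a * T f b - P e b * T a f

/-- Energy-momentum tensor `T = S - (κ/2) g` (units `8πG/c⁴ = 1`, `Λ = 0`). -/
def EnT (ξ : ℝ → ℝ) (x : Pt) (a b : Fin 4) : ℝ :=
  Ric ξ x a b - (scal ξ x / 2) * gM ξ x a b

/-- Lie derivative of the metric along a vector field `X`. -/
def LieG (ξ : ℝ → ℝ) (X : Pt → Fin 4 → ℝ) (x : Pt) (b c : Fin 4) : ℝ :=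
  ∑ a : Fin 4, (X x a * pd a (fun y => gM ξ y b c) x
    + gM ξ x a c * pd b (fun y => X y a) x + gM ξ x a b * pd c (fun y => X y a) x)

/-- Lie derivative of the Ricci tensor along a vector field `X`. -/
def LieS (ξ : ℝ → ℝ) (X : Pt → Fin 4 → ℝ) (x : Pt) (b c : Fin 4) : ℝ :=
  ∑ a : Fin 4, (X x a * pd a (fun y => Ric ξ y b c) x
    + Ric ξ x a c * pd b (fun y => X y a) x + Ric ξ x a b * pd c (fun y => X y a) x)

/-- Domain conditions for the interior black hole chart. -/
def Dom (ξ : ℝ → ℝ) (x : Pt) : Prop :=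
  0 < x 0 ∧ x 0 ≠ 2 * ξ (x 0) ∧ Real.sin (x 2) ≠ 0

namespace IBH

/-- `f(t) = 2ξ(t)/t - 1`. -/
def Fm (ξ : ℝ → ℝ) (t : ℝ) : ℝ := 2 * ξ t / t - 1
/-- `f'`. -/
def Fd (ξ : ℝ → ℝ) (t : ℝ) : ℝ := (2 * deriv ξ t * t - 2 * ξ t * 1) / t ^ 2
/-- `f''`. -/
def Fdd (ξ : ℝ → ℝ) (t : ℝ) : ℝ :=
  ((2 * deriv (deriv ξ) t * t + 2 * deriv ξ t * 1 - (2 * deriv ξ t * 1 + 2 * ξ t * 0)) * t ^ 2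
    - (2 * deriv ξ t * t - 2 * ξ t * 1) * (2 * t ^ 1 * 1)) / (t ^ 2) ^ 2

lemma hasDerivAt_Fm (ξ : ℝ → ℝ) (hξ : ContDiff ℝ (⊤ : ℕ∞) ξ) {t : ℝ} (ht : t ≠ 0) :
    HasDerivAt (Fm ξ) (Fd ξ t) t := by
  have h1 : HasDerivAt (fun s : ℝ => 2 * ξ s) (2 * deriv ξ t) t :=
    ((hξ.differentiable (by simp) t).hasDerivAt).const_mul 2
  have h2 : HasDerivAt (fun s : ℝ => s) (1 : ℝ) t := hasDerivAt_id' t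
  have := (h1.div h2 ht).sub_const 1
  have e : (2 * deriv ξ t * t - 2 * ξ t * 1) / t ^ 2 = Fd ξ t := rfl
  exact this

lemma hasDerivAt_Fd (ξ : ℝ → ℝ) (hξ : ContDiff ℝ (⊤ : ℕ∞) ξ) {t : ℝ} (ht : t ≠ 0) :
    HasDerivAt (Fd ξ) (Fdd ξ t) t := by
  have hξ' : ContDiff ℝ ((⊤ : ℕ∞) : WithTop ℕ∞) (deriv ξ) := (contDiff_infty_iff_deriv.mp (hξ.of_le (by simp))).2
  have h1 : HasDerivAt (fun s : ℝ => 2 * deriv ξ s * s - 2 * ξ s * 1)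
      (2 * deriv (deriv ξ) t * t + 2 * deriv ξ t * 1 - (2 * deriv ξ t * 1 + 2 * ξ t * 0)) t := by
    have a1 : HasDerivAt (fun s : ℝ => 2 * deriv ξ s) (2 * deriv (deriv ξ) t) t :=
      ((hξ'.differentiable (by simp) t).hasDerivAt).const_mul 2
    have a2 : HasDerivAt (fun s : ℝ => 2 * ξ s) (2 * deriv ξ t) t :=
      ((hξ.differentiable (by simp) t).hasDerivAt).const_mul 2
    exact (a1.mul (hasDerivAt_id' t)).sub (a2.mul (hasDerivAt_const t 1))
  have h2 : HasDerivAt (fun s : ℝ => s ^ 2) (2 * t ^ 1 * 1) t := by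
    simpa using ((hasDerivAt_id' t).fun_pow 2)
  have ht2 : t ^ 2 ≠ 0 := pow_ne_zero 2 ht
  exact h1.div h2 ht2

end IBH

namespace IBH

lemma Fm_ne (ξ : ℝ → ℝ) {y : Pt} (hy : Dom ξ y) : Fm ξ (y 0) ≠ 0 := by
  have ht : y 0 ≠ 0 := ne_of_gt hy.1
  have h1 := hy.2.1
  unfold Fm
  intro h
  apply h1
  field_simp at h
  linarith

/-- Diagonal entries of the metric. -/
def dia (ξ : ℝ → ℝ) (t θ : ℝ) : Fin 4 → ℝ :=
  ![-(Fm ξ t)⁻¹, Fm ξ t, t ^ 2, t ^ 2 * Real.sin θ ^ 2]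

lemma gM_eq (ξ : ℝ → ℝ) (x : Pt) :
    Matrix.of (gM ξ x) = Matrix.diagonal (dia ξ (x 0) (x 2)) := by
  ext i j
  by_cases h : i = j <;> simp [gM, h, Matrix.diagonal, dia, Fm]

lemma dia_ne (ξ : ℝ → ℝ) {y : Pt} (hy : Dom ξ y) (i : Fin 4) :
    dia ξ (y 0) (y 2) i ≠ 0 := by
  have ht : y 0 ≠ 0 := ne_of_gt hy.1
  have hF := Fm_ne ξ hy
  have hs := hy.2.2
  fin_cases i <;>
      simp [dia, hF, ht, hs, pow_ne_zero, inv_ne_zero, mul_ne_zero]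

lemma gInv_eq (ξ : ℝ → ℝ) {y : Pt} (hy : Dom ξ y) (i j : Fin 4) :
    gInv ξ y i j = if i = j then (dia ξ (y 0) (y 2) i)⁻¹ else 0 := by
  have hinv : Matrix.of (gM ξ y) * Matrix.diagonal (fun i => (dia ξ (y 0) (y 2) i)⁻¹) = 1 := by
    rw [gM_eq, Matrix.diagonal_mul_diagonal, ← Matrix.diagonal_one]
    have : (fun i => dia ξ (y 0) (y 2) i * (dia ξ (y 0) (y 2) i)⁻¹) = fun _ => (1:ℝ) := by
      funext i; exact mul_inv_cancel₀ (dia_ne ξ hy i)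
    rw [this]
  unfold gInv
  rw [Matrix.inv_eq_right_inv hinv, Matrix.diagonal_apply]

end IBH

namespace IBH

/-- Table of partial derivatives of the metric: direction `i`, entry `(j,k)`. -/
def gMd (ξ : ℝ → ℝ) (t θ : ℝ) (i j k : Fin 4) : ℝ :=
  if i = 0 then
    if j = 0 ∧ k = 0 then Fd ξ t / Fm ξ t ^ 2
    else if j = 1 ∧ k = 1 then Fd ξ t
    else if j = 2 ∧ k = 2 then 2 * t
    else if j = 3 ∧ k = 3 then 2 * t * Real.sin θ ^ 2
    else 0
  else if i = 2 ∧ j = 3 ∧ k = 3 then t ^ 2 * (2 * Real.sin θ * Real.cos θ)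
  else 0

set_option maxHeartbeats 4000000 in
lemma pd_gM (ξ : ℝ → ℝ) (hξ : ContDiff ℝ (⊤ : ℕ∞) ξ) {y : Pt} (hy : Dom ξ y) (i j k : Fin 4) :
    pd i (fun z => gM ξ z j k) y = gMd ξ (y 0) (y 2) i j k := by
  have ht : y 0 ≠ 0 := ne_of_gt hy.1
  have hF := Fm_ne ξ hy
  have e00 : HasDerivAt (fun s : ℝ => -(2 * ξ s / s - 1)⁻¹) (Fd ξ (y 0) / Fm ξ (y 0) ^ 2) (y 0) := by
    have h := (((hasDerivAt_Fm ξ hξ ht).inv hF).neg)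
    have e : -(-Fd ξ (y 0) / Fm ξ (y 0) ^ 2) = Fd ξ (y 0) / Fm ξ (y 0) ^ 2 := by ring
    rw [e] at h
    exact h
  have e11 : HasDerivAt (fun s : ℝ => 2 * ξ s / s - 1) (Fd ξ (y 0)) (y 0) :=
    hasDerivAt_Fm ξ hξ ht
  have e22 : HasDerivAt (fun s : ℝ => s ^ 2) (2 * y 0) (y 0) := by
    simpa using (hasDerivAt_id' (y 0)).fun_pow 2
  have e33 : HasDerivAt (fun s : ℝ => s ^ 2 * Real.sin (y 2) ^ 2)
      (2 * y 0 * Real.sin (y 2) ^ 2) (y 0) := e22.mul_const _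
  have f33 : HasDerivAt (fun s : ℝ => (y 0) ^ 2 * Real.sin s ^ 2)
      ((y 0) ^ 2 * (2 * Real.sin (y 2) * Real.cos (y 2))) (y 2) := by
    have h := ((Real.hasDerivAt_sin (y 2)).fun_pow 2).const_mul ((y 0) ^ 2)
    refine h.congr_deriv ?_
    ring
  fin_cases i <;> fin_cases j <;> fin_cases k <;>
    (conv_rhs => simp [gMd]) <;>
    unfold pd <;>
    (conv_lhs => enter [1]; ext s; simp [gM, Function.update_apply]) <;>
    first
      | exact e00.deriv
      | exact e11.deriv
      | exact e22.deriv
      | exact e33.deriv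
      | exact f33.deriv
      | (simp; done)

end IBH

namespace IBH

/-- Table of Christoffel symbols. -/
def chrT (ξ : ℝ → ℝ) (t θ : ℝ) (h i j : Fin 4) : ℝ :=
  if h = 0 then
    if i = 0 ∧ j = 0 then -(Fd ξ t / (2 * Fm ξ t))
    else if i = 1 ∧ j = 1 then Fm ξ t * Fd ξ t / 2
    else if i = 2 ∧ j = 2 then Fm ξ t * t
    else if i = 3 ∧ j = 3 then Fm ξ t * t * Real.sin θ ^ 2
    else 0
  else if h = 1 then
    if (i = 0 ∧ j = 1) ∨ (i = 1 ∧ j = 0) then Fd ξ t / (2 * Fm ξ t) else 0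
  else if h = 2 then
    if (i = 0 ∧ j = 2) ∨ (i = 2 ∧ j = 0) then t⁻¹
    else if i = 3 ∧ j = 3 then -(Real.sin θ * Real.cos θ) else 0
  else
    if (i = 0 ∧ j = 3) ∨ (i = 3 ∧ j = 0) then t⁻¹
    else if (i = 2 ∧ j = 3) ∨ (i = 3 ∧ j = 2) then Real.cos θ / Real.sin θ else 0

set_option maxHeartbeats 4000000 in
lemma chr_eq (ξ : ℝ → ℝ) (hξ : ContDiff ℝ (⊤ : ℕ∞) ξ) {y : Pt} (hy : Dom ξ y) (h i j : Fin 4) :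
    Chr ξ y h i j = chrT ξ (y 0) (y 2) h i j := by
  have ht : y 0 ≠ 0 := ne_of_gt hy.1
  have hF := Fm_ne ξ hy
  have hs := hy.2.2
  unfold Chr
  rw [Fin.sum_univ_four]
  simp only [gInv_eq ξ hy, pd_gM ξ hξ hy]
  fin_cases h <;> fin_cases i <;> fin_cases j <;>
    simp [gMd, dia, chrT] <;>
    field_simp <;>
    ring

end IBH

namespace IBH

lemma dom_upd (ξ : ℝ → ℝ) (hξ : ContDiff ℝ (⊤ : ℕ∞) ξ) {x : Pt} (hx : Dom ξ x) (m : Fin 4) :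
    ∀ᶠ s in nhds (x m), Dom ξ (Function.update x m s) := by
  have hc : Continuous fun s : ℝ => s - 2 * ξ s :=
    continuous_id.sub (continuous_const.mul hξ.continuous)
  fin_cases m
  · have h1 : ∀ᶠ s in nhds (x 0), 0 < s := eventually_gt_nhds hx.1
    have h2 : ∀ᶠ s in nhds (x 0), s - 2 * ξ s ≠ 0 :=
      hc.continuousAt.eventually_ne (sub_ne_zero.mpr hx.2.1)
    filter_upwards [h1, h2] with s hs1 hs2
    refine ⟨?_, ?_, ?_⟩ <;> simp [Dom, Function.update_apply]
    · exact hs1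
    · exact sub_ne_zero.mp hs2
    · exact hx.2.2
  · filter_upwards with s
    refine ⟨?_, ?_, ?_⟩ <;> simp only [Function.update_apply] <;> norm_num
    · exact hx.1
    · exact hx.2.1
    · exact hx.2.2
  · have h3 : ∀ᶠ s in nhds (x 2), Real.sin s ≠ 0 :=
      Real.continuous_sin.continuousAt.eventually_ne hx.2.2
    filter_upwards [h3] with s hs
    refine ⟨?_, ?_, ?_⟩ <;> simp [Dom, Function.update_apply]
    · exact hx.1
    · exact hx.2.1
    · exact hs
  · filter_upwards with s
    refine ⟨?_, ?_, ?_⟩ <;> simp only [Function.update_apply] <;> norm_num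
    · exact hx.1
    · exact hx.2.1
    · exact hx.2.2

end IBH

namespace IBH

/-- Table of partial derivatives of the Christoffel symbols:
direction `m`, symbol `(h,i,j)`. -/
def chrD (ξ : ℝ → ℝ) (t θ : ℝ) (m h i j : Fin 4) : ℝ :=
  if m = 0 then
    if h = 0 then
      if i = 0 ∧ j = 0 then
        -((Fdd ξ t * (2 * Fm ξ t) - Fd ξ t * (2 * Fd ξ t)) / (2 * Fm ξ t) ^ 2)
      else if i = 1 ∧ j = 1 then (Fd ξ t * Fd ξ t + Fm ξ t * Fdd ξ t) / 2
      else if i = 2 ∧ j = 2 then Fd ξ t * t + Fm ξ t * 1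
      else if i = 3 ∧ j = 3 then (Fd ξ t * t + Fm ξ t * 1) * Real.sin θ ^ 2
      else 0
    else if h = 1 then
      if (i = 0 ∧ j = 1) ∨ (i = 1 ∧ j = 0) then
        (Fdd ξ t * (2 * Fm ξ t) - Fd ξ t * (2 * Fd ξ t)) / (2 * Fm ξ t) ^ 2
      else 0
    else if h = 2 then
      if (i = 0 ∧ j = 2) ∨ (i = 2 ∧ j = 0) then -(t ^ 2)⁻¹ else 0
    else
      if (i = 0 ∧ j = 3) ∨ (i = 3 ∧ j = 0) then -(t ^ 2)⁻¹ else 0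
  else if m = 2 then
    if h = 0 ∧ i = 3 ∧ j = 3 then Fm ξ t * t * (2 * Real.sin θ * Real.cos θ)
    else if h = 2 ∧ i = 3 ∧ j = 3 then
      -(Real.cos θ * Real.cos θ + Real.sin θ * -Real.sin θ)
    else if h = 3 ∧ ((i = 2 ∧ j = 3) ∨ (i = 3 ∧ j = 2)) then
      (-Real.sin θ * Real.sin θ - Real.cos θ * Real.cos θ) / Real.sin θ ^ 2
    else 0
  else 0

lemma chr_upd (ξ : ℝ → ℝ) (hξ : ContDiff ℝ (⊤ : ℕ∞) ξ) {x : Pt} (hx : Dom ξ x)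
    (m h i j : Fin 4) :
    (fun s => Chr ξ (Function.update x m s) h i j) =ᶠ[nhds (x m)]
      fun s => chrT ξ (Function.update x m s 0) (Function.update x m s 2) h i j := by
  filter_upwards [dom_upd ξ hξ hx m] with s hs'
  exact chr_eq ξ hξ hs' h i j

set_option maxHeartbeats 1000000 in
lemma pd_chr1 (ξ : ℝ → ℝ) (hξ : ContDiff ℝ (⊤ : ℕ∞) ξ) {x : Pt} (hx : Dom ξ x) (h i j : Fin 4) :
    pd 1 (fun y => Chr ξ y h i j) x = chrD ξ (x 0) (x 2) 1 h i j := by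
  unfold pd
  rw [(chr_upd ξ hξ hx 1 h i j).deriv_eq]
  conv_lhs => enter [1]; ext s; simp [Function.update_apply]
  simp [chrD]

set_option maxHeartbeats 1000000 in
lemma pd_chr3 (ξ : ℝ → ℝ) (hξ : ContDiff ℝ (⊤ : ℕ∞) ξ) {x : Pt} (hx : Dom ξ x) (h i j : Fin 4) :
    pd 3 (fun y => Chr ξ y h i j) x = chrD ξ (x 0) (x 2) 3 h i j := by
  unfold pd
  rw [(chr_upd ξ hξ hx 3 h i j).deriv_eq]
  conv_lhs => enter [1]; ext s; simp [Function.update_apply]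
  simp [chrD]

set_option maxHeartbeats 8000000 in
lemma pd_chr0 (ξ : ℝ → ℝ) (hξ : ContDiff ℝ (⊤ : ℕ∞) ξ) {x : Pt} (hx : Dom ξ x) (h i j : Fin 4) :
    pd 0 (fun y => Chr ξ y h i j) x = chrD ξ (x 0) (x 2) 0 h i j := by
  have ht : x 0 ≠ 0 := ne_of_gt hx.1
  have hF := Fm_ne ξ hx
  have h2F : 2 * Fm ξ (x 0) ≠ 0 := mul_ne_zero two_ne_zero hF
  have hFm := hasDerivAt_Fm ξ hξ ht
  have hFd := hasDerivAt_Fd ξ hξ ht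
  have a1 : HasDerivAt (fun s => -(Fd ξ s / (2 * Fm ξ s)))
      (-((Fdd ξ (x 0) * (2 * Fm ξ (x 0)) - Fd ξ (x 0) * (2 * Fd ξ (x 0)))
        / (2 * Fm ξ (x 0)) ^ 2)) (x 0) :=
    (hFd.div (hFm.const_mul 2) h2F).neg
  have a2 : HasDerivAt (fun s => Fm ξ s * Fd ξ s / 2)
      ((Fd ξ (x 0) * Fd ξ (x 0) + Fm ξ (x 0) * Fdd ξ (x 0)) / 2) (x 0) :=
    (hFm.mul hFd).div_const 2
  have a3 : HasDerivAt (fun s => Fm ξ s * s)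
      (Fd ξ (x 0) * x 0 + Fm ξ (x 0) * 1) (x 0) := hFm.mul (hasDerivAt_id' (x 0))
  have a4 : HasDerivAt (fun s => Fm ξ s * s * Real.sin (x 2) ^ 2)
      ((Fd ξ (x 0) * x 0 + Fm ξ (x 0) * 1) * Real.sin (x 2) ^ 2) (x 0) :=
    a3.mul_const _
  have a5 : HasDerivAt (fun s => Fd ξ s / (2 * Fm ξ s))
      ((Fdd ξ (x 0) * (2 * Fm ξ (x 0)) - Fd ξ (x 0) * (2 * Fd ξ (x 0)))
        / (2 * Fm ξ (x 0)) ^ 2) (x 0) :=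
    hFd.div (hFm.const_mul 2) h2F
  have a6 : HasDerivAt (fun s : ℝ => s⁻¹) (-(x 0 ^ 2)⁻¹) (x 0) := hasDerivAt_inv ht
  unfold pd
  rw [(chr_upd ξ hξ hx 0 h i j).deriv_eq]
  conv_lhs => enter [1]; ext s; simp [Function.update_apply]
  fin_cases h <;> fin_cases i <;> fin_cases j <;>
    (try (conv_rhs => simp [chrD])) <;>
    (try (conv_lhs => enter [1]; ext s; simp [chrT])) <;>
    first
      | exact a1.deriv
      | exact a2.deriv
      | exact a3.deriv
      | exact a4.deriv
      | exact a5.deriv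
      | exact a6.deriv
      | (rw [a3.deriv]; ring)
      | (rw [a4.deriv]; ring)
      | (simp; done)

set_option maxHeartbeats 8000000 in
lemma pd_chr2 (ξ : ℝ → ℝ) (hξ : ContDiff ℝ (⊤ : ℕ∞) ξ) {x : Pt} (hx : Dom ξ x) (h i j : Fin 4) :
    pd 2 (fun y => Chr ξ y h i j) x = chrD ξ (x 0) (x 2) 2 h i j := by
  have hs : Real.sin (x 2) ≠ 0 := hx.2.2
  have hsin := Real.hasDerivAt_sin (x 2)
  have hcos := Real.hasDerivAt_cos (x 2)
  have b1 : HasDerivAt (fun s => Fm ξ (x 0) * x 0 * Real.sin s ^ 2)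
      (Fm ξ (x 0) * x 0 * (2 * Real.sin (x 2) * Real.cos (x 2))) (x 2) := by
    have h := (hsin.fun_pow 2).const_mul (Fm ξ (x 0) * x 0)
    refine h.congr_deriv ?_
    norm_num
  have b2 : HasDerivAt (fun s => -(Real.sin s * Real.cos s))
      (-(Real.cos (x 2) * Real.cos (x 2) + Real.sin (x 2) * -Real.sin (x 2))) (x 2) :=
    (hsin.mul hcos).neg
  have b3 : HasDerivAt (fun s => Real.cos s / Real.sin s)
      ((-Real.sin (x 2) * Real.sin (x 2) - Real.cos (x 2) * Real.cos (x 2))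
        / Real.sin (x 2) ^ 2) (x 2) :=
    hcos.div hsin hs
  unfold pd
  rw [(chr_upd ξ hξ hx 2 h i j).deriv_eq]
  conv_lhs => enter [1]; ext s; simp [Function.update_apply]
  fin_cases h <;> fin_cases i <;> fin_cases j <;>
    (try (conv_rhs => simp [chrD])) <;>
    (try (conv_lhs => enter [1]; ext s; simp [chrT])) <;>
    first
      | exact b1.deriv
      | exact b2.deriv
      | exact b3.deriv
      | (rw [b2.deriv]; ring)
      | (rw [b3.deriv]; ring)
      | (rw [b1.deriv]; ring)
      | (simp; done)

end IBH

namespace IBH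

lemma pd_chr (ξ : ℝ → ℝ) (hξ : ContDiff ℝ (⊤ : ℕ∞) ξ) {x : Pt} (hx : Dom ξ x) (m h i j : Fin 4) :
    pd m (fun y => Chr ξ y h i j) x = chrD ξ (x 0) (x 2) m h i j := by
  fin_cases m
  · exact pd_chr0 ξ hξ hx h i j
  · exact pd_chr1 ξ hξ hx h i j
  · exact pd_chr2 ξ hξ hx h i j
  · exact pd_chr3 ξ hξ hx h i j

end IBH

open IBH in
set_option maxHeartbeats 4000000 in
/-- the Ricci tensor of the IBH spacetime is diagonal with the
stated eigenvalue functions `-ξ''/t` and `-2ξ'/t²` relative to `g`. -/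
theorem ibh_ricci_components (ξ : ℝ → ℝ) (hξ : ContDiff ℝ (⊤ : ℕ∞) ξ) (x : Pt)
    (hx : Dom ξ x) :
    (∀ i j : Fin 4, i ≠ j → Ric ξ x i j = 0) ∧
    Ric ξ x 0 0 = -(deriv (deriv ξ) (x 0) / x 0) * gM ξ x 0 0 ∧
    Ric ξ x 1 1 = -(deriv (deriv ξ) (x 0) / x 0) * gM ξ x 1 1 ∧
    Ric ξ x 2 2 = -(2 * deriv ξ (x 0) / (x 0) ^ 2) * gM ξ x 2 2 ∧
    Ric ξ x 3 3 = -(2 * deriv ξ (x 0) / (x 0) ^ 2) * gM ξ x 3 3 := by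
  have ht : x 0 ≠ 0 := ne_of_gt hx.1
  have hF2 : 2 * ξ (x 0) - x 0 ≠ 0 := sub_ne_zero.mpr (fun h => hx.2.1 h.symm)
  have hs : Real.sin (x 2) ≠ 0 := hx.2.2
  refine ⟨?_, ?_, ?_, ?_, ?_⟩
  · intro i j hij
    fin_cases i <;> fin_cases j <;> (try (simp at hij)) <;>
      (unfold Ric Riem13;
       simp only [Fin.sum_univ_four, pd_chr ξ hξ hx, chr_eq ξ hξ hx];
       simp [chrD, chrT]) <;>
      (try ring) <;> (try (unfold Fm)) <;> (try (unfold Fd)) <;> (try (unfold Fdd)) <;>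
      (try (field_simp [ht, hF2, hs])) <;> (try ring) <;>
      (try (linear_combination Real.sin_sq_add_cos_sq (x 2)))
  · unfold Ric Riem13
    simp only [Fin.sum_univ_four, pd_chr ξ hξ hx, chr_eq ξ hξ hx]
    simp [chrD, chrT, gM]
    unfold Fm Fd Fdd
    field_simp [ht, hF2, hs]
    ring
  · unfold Ric Riem13
    simp only [Fin.sum_univ_four, pd_chr ξ hξ hx, chr_eq ξ hξ hx]
    simp [chrD, chrT, gM]
    unfold Fm Fd Fdd
    field_simp [ht, hF2, hs]
    ring
  · unfold Ric Riem13
    simp only [Fin.sum_univ_four, pd_chr ξ hξ hx, chr_eq ξ hξ hx]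
    simp [chrD, chrT, gM]
    try unfold Fm
    try unfold Fd
    try unfold Fdd
    field_simp [ht, hF2, hs]
    try ring
    try linear_combination (x 0 ^ 4) * Real.sin_sq_add_cos_sq (x 2)
    try linear_combination (x 0 ^ 4 * Real.sin (x 2) ^ 2) * Real.sin_sq_add_cos_sq (x 2)
    try linear_combination (x 0 ^ 2) * Real.sin_sq_add_cos_sq (x 2)
    try linear_combination (x 0 ^ 2 * Real.sin (x 2) ^ 2) * Real.sin_sq_add_cos_sq (x 2)
  · unfold Ric Riem13
    simp only [Fin.sum_univ_four, pd_chr ξ hξ hx, chr_eq ξ hξ hx]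
    simp [chrD, chrT, gM]
    try unfold Fm
    try unfold Fd
    try unfold Fdd
    field_simp [ht, hF2, hs]
    try ring
    try linear_combination (x 0 ^ 4) * Real.sin_sq_add_cos_sq (x 2)
    try linear_combination (x 0 ^ 4 * Real.sin (x 2) ^ 2) * Real.sin_sq_add_cos_sq (x 2)
    try linear_combination (x 0 ^ 2) * Real.sin_sq_add_cos_sq (x 2)
    try linear_combination (x 0 ^ 2 * Real.sin (x 2) ^ 2) * Real.sin_sq_add_cos_sq (x 2)
end
end

section
/- The scalar curvature of the interior black hole metric equals κ = -2(2ξ' + t ξ'')/t². -/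
noncomputable section
open Real

namespace IBHaux

/-- metric diagonal entries -/
def dv (ξ : ℝ → ℝ) (x : Pt) : Fin 4 → ℝ :=
  ![-(2 * ξ (x 0) / x 0 - 1)⁻¹, 2 * ξ (x 0) / x 0 - 1,
    (x 0) ^ 2, (x 0) ^ 2 * Real.sin (x 2) ^ 2]

lemma gM_eq (ξ : ℝ → ℝ) (x : Pt) (i j : Fin 4) :
    gM ξ x i j = if i = j then dv ξ x i else 0 := rfl

lemma Fne (ξ : ℝ → ℝ) (x : Pt) (hx : Dom ξ x) : 2 * ξ (x 0) / x 0 - 1 ≠ 0 := by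
  obtain ⟨h0, h1, -⟩ := hx
  have ht : x 0 ≠ 0 := ne_of_gt h0
  intro h
  apply h1
  field_simp at h
  linarith

lemma dv_ne (ξ : ℝ → ℝ) (x : Pt) (hx : Dom ξ x) (i : Fin 4) : dv ξ x i ≠ 0 := by
  have hF := Fne ξ x hx
  obtain ⟨h0, -, h2⟩ := hx
  have ht : x 0 ≠ 0 := ne_of_gt h0
  fin_cases i <;> simp [dv] <;> tauto

lemma gInv_eq (ξ : ℝ → ℝ) (x : Pt) (hx : Dom ξ x) (i j : Fin 4) :
    gInv ξ x i j = if i = j then (dv ξ x i)⁻¹ else 0 := by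
  have h : Matrix.of (gM ξ x) = Matrix.diagonal (dv ξ x) := by
    ext a b
    by_cases hab : a = b <;> simp [gM_eq, Matrix.diagonal_apply, hab]
  have hB : Matrix.of (gM ξ x) * Matrix.diagonal (fun k => (dv ξ x k)⁻¹) = 1 := by
    rw [h, Matrix.diagonal_mul_diagonal]
    ext a b
    by_cases hab : a = b <;>
      simp [Matrix.diagonal_apply, hab, Matrix.one_apply, mul_inv_cancel₀ (dv_ne ξ x hx _)]
  show (Matrix.of (gM ξ x))⁻¹ i j = _
  rw [Matrix.inv_eq_right_inv hB]
  simp [Matrix.diagonal_apply]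

end IBHaux
namespace IBHaux

def Fd (ξ : ℝ → ℝ) (t : ℝ) : ℝ := 2 * deriv ξ t / t - 2 * ξ t / t ^ 2
def Fdd (ξ : ℝ → ℝ) (t : ℝ) : ℝ :=
  2 * deriv (deriv ξ) t / t - 4 * deriv ξ t / t ^ 2 + 4 * ξ t / t ^ 3

lemma diff1 {ξ : ℝ → ℝ} (hξ : ContDiff ℝ (⊤ : ℕ∞) ξ) : Differentiable ℝ ξ :=
  hξ.differentiable (by simp)

lemma diff2 {ξ : ℝ → ℝ} (hξ : ContDiff ℝ (⊤ : ℕ∞) ξ) : Differentiable ℝ (deriv ξ) :=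
  ((contDiff_infty_iff_deriv.mp (hξ.of_le (by simp))).2).differentiable (by simp)

lemma hasF {ξ : ℝ → ℝ} (hξ : ContDiff ℝ (⊤ : ℕ∞) ξ) {t : ℝ} (ht : t ≠ 0) :
    HasDerivAt (fun s => 2 * ξ s / s) (Fd ξ t) t := by
  have h1 : HasDerivAt (fun s => 2 * ξ s) (2 * deriv ξ t) t :=
    ((diff1 hξ t).hasDerivAt).const_mul 2
  have h2 := h1.div (hasDerivAt_id t) ht
  refine h2.congr_deriv ?_
  simp only [id, Fd]
  have h3 : t ^ 2 ≠ 0 := pow_ne_zero _ ht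
  field_simp [Fd]

lemma hasFv {ξ : ℝ → ℝ} (hξ : ContDiff ℝ (⊤ : ℕ∞) ξ) {t : ℝ} (ht : t ≠ 0) :
    HasDerivAt (fun s => 2 * ξ s / s - 1) (Fd ξ t) t := (hasF hξ ht).sub_const 1

lemma hasFd {ξ : ℝ → ℝ} (hξ : ContDiff ℝ (⊤ : ℕ∞) ξ) {t : ℝ} (ht : t ≠ 0) :
    HasDerivAt (Fd ξ) (Fdd ξ t) t := by
  have h1 : HasDerivAt (fun s => 2 * deriv ξ s) (2 * deriv (deriv ξ) t) t :=
    ((diff2 hξ t).hasDerivAt).const_mul 2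
  have h2 := h1.div (hasDerivAt_id t) ht
  have h3 : HasDerivAt (fun s => 2 * ξ s) (2 * deriv ξ t) t :=
    ((diff1 hξ t).hasDerivAt).const_mul 2
  have h4 := h3.div (hasDerivAt_pow 2 t) (pow_ne_zero _ ht)
  have h5 := h2.sub h4
  refine h5.congr_deriv ?_
  simp only [id, Fdd, Fd]
  have h6 : t ^ 2 ≠ 0 := pow_ne_zero _ ht
  have h7 : t ^ 3 ≠ 0 := pow_ne_zero _ ht
  field_simp [Fdd, Fd]
  ring

/-- table of partial derivatives of the metric -/
def DG (ξ : ℝ → ℝ) (x : Pt) (i j k : Fin 4) : ℝ :=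
  if j = k then
    if i = 0 then
      (![Fd ξ (x 0) / (2 * ξ (x 0) / x 0 - 1) ^ 2, Fd ξ (x 0), 2 * x 0,
         2 * x 0 * Real.sin (x 2) ^ 2] : Fin 4 → ℝ) j
    else if i = 2 ∧ j = 3 then 2 * (x 0) ^ 2 * Real.sin (x 2) * Real.cos (x 2)
    else 0
  else 0

lemma pd_gM {ξ : ℝ → ℝ} (hξ : ContDiff ℝ (⊤ : ℕ∞) ξ) (x : Pt) (hx : Dom ξ x)
    (i j k : Fin 4) : pd i (fun y => gM ξ y j k) x = DG ξ x i j k := by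
  have ht : x 0 ≠ 0 := ne_of_gt hx.1
  have hF : 2 * ξ (x 0) / x 0 - 1 ≠ 0 := Fne ξ x hx
  have Dq : deriv (fun s => 2 * ξ s / s) (x 0) = Fd ξ (x 0) := (hasF hξ ht).deriv
  have D11 : deriv (fun s => 2 * ξ s / s - 1) (x 0) = Fd ξ (x 0) := (hasFv hξ ht).deriv
  have hinv : HasDerivAt (fun s => (2 * ξ s / s - 1)⁻¹)
      (-Fd ξ (x 0) / (2 * ξ (x 0) / x 0 - 1) ^ 2) (x 0) := (hasFv hξ ht).inv hF
  have Dinv := hinv.deriv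
  fin_cases i <;> fin_cases j <;> fin_cases k <;>
    simp [pd, gM, DG, Function.update, Dq, D11, Dinv, ht] <;>
    ring

end IBHaux
namespace IBHaux

/-- closed-form Christoffel symbols -/
def Cf (ξ : ℝ → ℝ) (y : Pt) (h i j : Fin 4) : ℝ :=
  ![![![-(Fd ξ (y 0) / (2 * (2 * ξ (y 0) / y 0 - 1))), 0, 0, 0],
     ![0, (2 * ξ (y 0) / y 0 - 1) * Fd ξ (y 0) / 2, 0, 0],
     ![0, 0, y 0 * (2 * ξ (y 0) / y 0 - 1), 0],
     ![0, 0, 0, y 0 * (2 * ξ (y 0) / y 0 - 1) * Real.sin (y 2) ^ 2]],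
    ![![0, Fd ξ (y 0) / (2 * (2 * ξ (y 0) / y 0 - 1)), 0, 0],
     ![Fd ξ (y 0) / (2 * (2 * ξ (y 0) / y 0 - 1)), 0, 0, 0],
     ![0, 0, 0, 0], ![0, 0, 0, 0]],
    ![![0, 0, (y 0)⁻¹, 0], ![0, 0, 0, 0], ![(y 0)⁻¹, 0, 0, 0],
     ![0, 0, 0, -(Real.sin (y 2) * Real.cos (y 2))]],
    ![![0, 0, 0, (y 0)⁻¹], ![0, 0, 0, 0],
     ![0, 0, 0, Real.cos (y 2) / Real.sin (y 2)],
     ![(y 0)⁻¹, 0, Real.cos (y 2) / Real.sin (y 2), 0]]] h i j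

set_option maxHeartbeats 1000000 in
lemma chr_eq {ξ : ℝ → ℝ} (hξ : ContDiff ℝ (⊤ : ℕ∞) ξ) (x : Pt) (hx : Dom ξ x)
    (h i j : Fin 4) : Chr ξ x h i j = Cf ξ x h i j := by
  have ht : x 0 ≠ 0 := ne_of_gt hx.1
  have hF : 2 * ξ (x 0) / x 0 - 1 ≠ 0 := Fne ξ x hx
  have hs : Real.sin (x 2) ≠ 0 := hx.2.2
  have hG : ξ (x 0) * 4 - x 0 * 2 ≠ 0 := by
    intro h; apply hx.2.1; linarith
  have hG2 : ξ (x 0) * x 0 ^ 2 * 8 + (-(ξ (x 0) ^ 2 * x 0 * 8) - x 0 ^ 3 * 2) ≠ 0 := by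
    have he : ξ (x 0) * x 0 ^ 2 * 8 + (-(ξ (x 0) ^ 2 * x 0 * 8) - x 0 ^ 3 * 2)
        = -2 * x 0 * (2 * ξ (x 0) - x 0) ^ 2 := by ring
    rw [he]
    have h1 : 2 * ξ (x 0) - x 0 ≠ 0 := by
      intro h; apply hx.2.1; linarith
    exact mul_ne_zero (mul_ne_zero (by norm_num) ht) (pow_ne_zero _ h1)
  have h1 : 2 * ξ (x 0) - x 0 ≠ 0 := by
    intro h; apply hx.2.1; linarith
  have hA : -x 0 + ξ (x 0) * 2 ≠ 0 := by
    intro h; apply hx.2.1; linarith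
  have hB : -(x 0 * 2) + ξ (x 0) * 4 ≠ 0 := by
    intro h; apply hx.2.1; linarith
  fin_cases h <;> fin_cases i <;> fin_cases j <;>
    (simp only [Chr, Fin.sum_univ_four, gInv_eq ξ x hx, pd_gM hξ x hx];
     simp [DG, dv, Cf, Matrix.vecHead, Matrix.vecTail]) <;>
    try first
    | tauto
    | (field_simp [hG, hG2]; ring)
    | ring
  all_goals (try rw [inv_inv]) <;> field_simp <;> ring

end IBHaux
namespace IBHaux

lemma dom_open {ξ : ℝ → ℝ} (hξ : ContDiff ℝ (⊤ : ℕ∞) ξ) : IsOpen {y : Pt | Dom ξ y} := by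
  have h1 : IsOpen {y : Pt | 0 < y 0} :=
    isOpen_lt continuous_const (continuous_apply 0)
  have h2 : IsOpen {y : Pt | y 0 ≠ 2 * ξ (y 0)} := by
    have : Continuous fun y : Pt => 2 * ξ (y 0) :=
      continuous_const.mul ((diff1 hξ).continuous.comp (continuous_apply 0))
    exact isOpen_ne_fun (continuous_apply 0) this
  have h3 : IsOpen {y : Pt | Real.sin (y 2) ≠ 0} :=
    isOpen_ne_fun (Real.continuous_sin.comp (continuous_apply 2)) continuous_const
  have : {y : Pt | Dom ξ y} =
      ({y : Pt | 0 < y 0} ∩ ({y : Pt | y 0 ≠ 2 * ξ (y 0)} ∩ {y : Pt | Real.sin (y 2) ≠ 0})) := rfl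
  rw [this]
  exact h1.inter (h2.inter h3)

lemma pd_congr_dom {ξ : ℝ → ℝ} (hξ : ContDiff ℝ (⊤ : ℕ∞) ξ) (x : Pt) (hx : Dom ξ x)
    {f g : Pt → ℝ} (hfg : ∀ y, Dom ξ y → f y = g y) (i : Fin 4) :
    pd i f x = pd i g x := by
  have hp : Continuous fun s : ℝ => Function.update x i s :=
    continuous_const.update i continuous_id
  have hmem : ∀ᶠ s in nhds (x i), Dom ξ (Function.update x i s) := by
    have hx' : Function.update x i (x i) ∈ {y : Pt | Dom ξ y} := by
      rw [Function.update_eq_self]; exact hx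
    exact hp.continuousAt.preimage_mem_nhds ((dom_open hξ).mem_nhds hx')
  exact Filter.EventuallyEq.deriv_eq (hmem.mono fun s hs => hfg _ hs)

lemma pd_chr {ξ : ℝ → ℝ} (hξ : ContDiff ℝ (⊤ : ℕ∞) ξ) (x : Pt) (hx : Dom ξ x)
    (i a q r : Fin 4) :
    pd i (fun y => Chr ξ y a q r) x = pd i (fun y => Cf ξ y a q r) x :=
  pd_congr_dom hξ x hx (fun y hy => chr_eq hξ y hy a q r) i

end IBHaux
namespace IBHaux

section
variable {ξ : ℝ → ℝ} (hξ : ContDiff ℝ (⊤ : ℕ∞) ξ) (x : Pt) (hx : Dom ξ x)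

lemma pdC1 (a q r : Fin 4) : pd 1 (fun y => Cf ξ y a q r) x = 0 := by
  simp only [pd]
  have h : (fun s => Cf ξ (Function.update x 1 s) a q r) = fun _ => Cf ξ x a q r := by
    funext s
    have h0 : Function.update x 1 s 0 = x 0 := Function.update_of_ne (by decide) _ _
    have h2 : Function.update x 1 s 2 = x 2 := Function.update_of_ne (by decide) _ _
    simp only [Cf, h0, h2]
  rw [h]; exact deriv_const _ _

lemma pdC3 (a q r : Fin 4) : pd 3 (fun y => Cf ξ y a q r) x = 0 := by
  simp only [pd]
  have h : (fun s => Cf ξ (Function.update x 3 s) a q r) = fun _ => Cf ξ x a q r := by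
    funext s
    have h0 : Function.update x 3 s 0 = x 0 := Function.update_of_ne (by decide) _ _
    have h2 : Function.update x 3 s 2 = x 2 := Function.update_of_ne (by decide) _ _
    simp only [Cf, h0, h2]
  rw [h]; exact deriv_const _ _

lemma pdC_zero (i a q r : Fin 4) (h : ∀ y : Pt, Cf ξ y a q r = 0) :
    pd i (fun y => Cf ξ y a q r) x = 0 := by
  simp only [pd, h]
  exact deriv_const _ _

include hξ hx

lemma pdC000 : pd 0 (fun y => Cf ξ y 0 0 0) x
    = -((Fdd ξ (x 0) * (2 * (2 * ξ (x 0) / x 0 - 1)) - Fd ξ (x 0) * (2 * Fd ξ (x 0))) /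
        (2 * (2 * ξ (x 0) / x 0 - 1)) ^ 2) := by
  have ht : x 0 ≠ 0 := ne_of_gt hx.1
  have h2F : 2 * (2 * ξ (x 0) / x 0 - 1) ≠ 0 := mul_ne_zero two_ne_zero (Fne ξ x hx)
  have h := (((hasFd hξ ht).div ((hasFv hξ ht).const_mul 2) h2F)).neg
  rw [← h.deriv]
  simp only [pd]
  congr 1
  all_goals funext s
  all_goals simp [Cf, Function.update]

lemma pdC101 : pd 0 (fun y => Cf ξ y 1 0 1) x
    = (Fdd ξ (x 0) * (2 * (2 * ξ (x 0) / x 0 - 1)) - Fd ξ (x 0) * (2 * Fd ξ (x 0))) /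
        (2 * (2 * ξ (x 0) / x 0 - 1)) ^ 2 := by
  have ht : x 0 ≠ 0 := ne_of_gt hx.1
  have h2F : 2 * (2 * ξ (x 0) / x 0 - 1) ≠ 0 := mul_ne_zero two_ne_zero (Fne ξ x hx)
  have h := ((hasFd hξ ht).div ((hasFv hξ ht).const_mul 2) h2F)
  rw [← h.deriv]
  simp only [pd]
  congr 1
  all_goals funext s
  all_goals simp [Cf, Function.update]

lemma pdC011 : pd 0 (fun y => Cf ξ y 0 1 1) x
    = (Fd ξ (x 0) * Fd ξ (x 0) + (2 * ξ (x 0) / x 0 - 1) * Fdd ξ (x 0)) / 2 := by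
  have ht : x 0 ≠ 0 := ne_of_gt hx.1
  have h := ((hasFv hξ ht).mul (hasFd hξ ht)).div_const 2
  rw [← h.deriv]
  simp only [pd]
  congr 1
  all_goals funext s
  all_goals simp [Cf, Function.update]

lemma pdC202 : pd 0 (fun y => Cf ξ y 2 0 2) x = -((x 0) ^ 2)⁻¹ := by
  have ht : x 0 ≠ 0 := ne_of_gt hx.1
  have h := hasDerivAt_inv ht
  rw [← h.deriv]
  simp only [pd]
  congr 1
  all_goals funext s
  all_goals simp [Cf, Function.update]

lemma pdC303 : pd 0 (fun y => Cf ξ y 3 0 3) x = -((x 0) ^ 2)⁻¹ := by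
  have ht : x 0 ≠ 0 := ne_of_gt hx.1
  have h := hasDerivAt_inv ht
  rw [← h.deriv]
  simp only [pd]
  congr 1
  all_goals funext s
  all_goals simp [Cf, Function.update]

lemma pdC022 : pd 0 (fun y => Cf ξ y 0 2 2) x
    = 1 * (2 * ξ (x 0) / x 0 - 1) + x 0 * Fd ξ (x 0) := by
  have ht : x 0 ≠ 0 := ne_of_gt hx.1
  have h := (hasDerivAt_id' (x := x 0)).mul (hasFv hξ ht)
  rw [← h.deriv]
  simp only [pd]
  congr 1
  all_goals funext s
  all_goals simp [Cf, Function.update]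

lemma pdC033 : pd 0 (fun y => Cf ξ y 0 3 3) x
    = (1 * (2 * ξ (x 0) / x 0 - 1) + x 0 * Fd ξ (x 0)) * Real.sin (x 2) ^ 2 := by
  have ht : x 0 ≠ 0 := ne_of_gt hx.1
  have h := ((hasDerivAt_id' (x := x 0)).mul (hasFv hξ ht)).mul_const (Real.sin (x 2) ^ 2)
  rw [← h.deriv]
  simp only [pd]
  congr 1
  all_goals funext s
  all_goals simp [Cf, Function.update]

omit hξ

lemma pdC323 : pd 2 (fun y => Cf ξ y 3 2 3) x
    = (-Real.sin (x 2) * Real.sin (x 2) - Real.cos (x 2) * Real.cos (x 2)) /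
        Real.sin (x 2) ^ 2 := by
  have hs : Real.sin (x 2) ≠ 0 := hx.2.2
  have h := (Real.hasDerivAt_cos (x 2)).div (Real.hasDerivAt_sin (x 2)) hs
  rw [← h.deriv]
  simp only [pd]
  congr 1
  all_goals funext s
  all_goals simp [Cf, Function.update]

lemma pdC233 : pd 2 (fun y => Cf ξ y 2 3 3) x
    = -(Real.cos (x 2) * Real.cos (x 2) + Real.sin (x 2) * -Real.sin (x 2)) := by
  have h := ((Real.hasDerivAt_sin (x 2)).mul (Real.hasDerivAt_cos (x 2))).neg
  rw [← h.deriv]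
  simp only [pd]
  congr 1
  all_goals funext s
  all_goals simp [Cf, Function.update]

end
end IBHaux
namespace IBHaux

set_option maxHeartbeats 2000000 in
lemma Ric00 {ξ : ℝ → ℝ} (hξ : ContDiff ℝ (⊤ : ℕ∞) ξ) (x : Pt) (hx : Dom ξ x) :
    Ric ξ x 0 0 = Fdd ξ (x 0) / (2 * (2 * ξ (x 0) / x 0 - 1))
      + Fd ξ (x 0) / (x 0 * (2 * ξ (x 0) / x 0 - 1)) := by
  have ht : x 0 ≠ 0 := ne_of_gt hx.1
  have hF : 2 * ξ (x 0) / x 0 - 1 ≠ 0 := Fne ξ x hx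
  have hs : Real.sin (x 2) ≠ 0 := hx.2.2
  have Z200 : pd 2 (fun y => Cf ξ y 2 0 0) x = 0 :=
    pdC_zero x 2 2 0 0 (fun y => by simp [Cf, Matrix.vecHead, Matrix.vecTail])
  simp only [Ric, Riem13, Fin.sum_univ_four, pd_chr hξ x hx]
  simp only [pdC1, pdC3, Z200, pdC000 hξ x hx, pdC101 hξ x hx,
    pdC202 hξ x hx, pdC303 hξ x hx]
  simp only [chr_eq hξ x hx]
  simp only [Cf, Matrix.cons_val_zero, Matrix.cons_val_one, Matrix.head_cons,
    Matrix.cons_val_two, Matrix.cons_val_three, Matrix.tail_cons, Matrix.vecHead,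
    Matrix.vecTail, Function.comp_apply, Matrix.cons_val_succ, Matrix.cons_val]
  have h1 : 2 * ξ (x 0) - x 0 ≠ 0 := fun h => hx.2.1 (by linarith)
  have hGe : 2 * ξ (x 0) / x 0 - 1 = (2 * ξ (x 0) - x 0) / x 0 := by field_simp
  simp only [hGe]
  field_simp
  ring

end IBHaux

namespace IBHaux

set_option maxHeartbeats 2000000 in
lemma Ric11 {ξ : ℝ → ℝ} (hξ : ContDiff ℝ (⊤ : ℕ∞) ξ) (x : Pt) (hx : Dom ξ x) :
    Ric ξ x 1 1 = -((2 * ξ (x 0) / x 0 - 1) * Fdd ξ (x 0) / 2)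
      - (2 * ξ (x 0) / x 0 - 1) * Fd ξ (x 0) / x 0 := by
  have ht : x 0 ≠ 0 := ne_of_gt hx.1
  have hF : 2 * ξ (x 0) / x 0 - 1 ≠ 0 := Fne ξ x hx
  have hs : Real.sin (x 2) ≠ 0 := hx.2.2
  have Z211 : pd 2 (fun y => Cf ξ y 2 1 1) x = 0 :=
    pdC_zero x 2 2 1 1 (fun y => by simp [Cf, Matrix.vecHead, Matrix.vecTail])
  simp only [Ric, Riem13, Fin.sum_univ_four, pd_chr hξ x hx]
  simp only [pdC1, pdC3, Z211, pdC011 hξ x hx]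
  simp only [chr_eq hξ x hx]
  simp only [Cf, Matrix.cons_val_zero, Matrix.cons_val_one, Matrix.head_cons,
    Matrix.cons_val_two, Matrix.cons_val_three, Matrix.tail_cons, Matrix.vecHead,
    Matrix.vecTail, Function.comp_apply, Matrix.cons_val_succ, Matrix.cons_val]
  have h1 : 2 * ξ (x 0) - x 0 ≠ 0 := fun h => hx.2.1 (by linarith)
  have hGe : 2 * ξ (x 0) / x 0 - 1 = (2 * ξ (x 0) - x 0) / x 0 := by field_simp
  simp only [hGe]
  field_simp
  ring

set_option maxHeartbeats 2000000 in
lemma Ric22 {ξ : ℝ → ℝ} (hξ : ContDiff ℝ (⊤ : ℕ∞) ξ) (x : Pt) (hx : Dom ξ x) :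
    Ric ξ x 2 2 = -(2 * ξ (x 0) / x 0 - 1) - x 0 * Fd ξ (x 0) - 1 := by
  have ht : x 0 ≠ 0 := ne_of_gt hx.1
  have hF : 2 * ξ (x 0) / x 0 - 1 ≠ 0 := Fne ξ x hx
  have hs : Real.sin (x 2) ≠ 0 := hx.2.2
  have Z020 : pd 2 (fun y => Cf ξ y 0 2 0) x = 0 :=
    pdC_zero x 2 0 2 0 (fun y => by simp [Cf, Matrix.vecHead, Matrix.vecTail])
  have Z121 : pd 2 (fun y => Cf ξ y 1 2 1) x = 0 :=
    pdC_zero x 2 1 2 1 (fun y => by simp [Cf, Matrix.vecHead, Matrix.vecTail])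
  have Z222 : pd 2 (fun y => Cf ξ y 2 2 2) x = 0 :=
    pdC_zero x 2 2 2 2 (fun y => by simp [Cf, Matrix.vecHead, Matrix.vecTail])
  have hcos : Real.cos (x 2) ^ 2 = 1 - Real.sin (x 2) ^ 2 := Real.cos_sq' (x 2)
  simp only [Ric, Riem13, Fin.sum_univ_four, pd_chr hξ x hx]
  simp only [pdC1, pdC3, Z020, Z121, Z222, pdC323 x hx, pdC022 hξ x hx]
  simp only [chr_eq hξ x hx]
  simp only [Cf, Matrix.cons_val_zero, Matrix.cons_val_one, Matrix.head_cons,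
    Matrix.cons_val_two, Matrix.cons_val_three, Matrix.tail_cons, Matrix.vecHead,
    Matrix.vecTail, Function.comp_apply, Matrix.cons_val_succ, Matrix.cons_val]
  have h1 : 2 * ξ (x 0) - x 0 ≠ 0 := fun h => hx.2.1 (by linarith)
  have hGe : 2 * ξ (x 0) / x 0 - 1 = (2 * ξ (x 0) - x 0) / x 0 := by field_simp
  simp only [hGe]
  field_simp
  ring_nf
  try simp only [hcos]
  try ring

set_option maxHeartbeats 2000000 in
lemma Ric33 {ξ : ℝ → ℝ} (hξ : ContDiff ℝ (⊤ : ℕ∞) ξ) (x : Pt) (hx : Dom ξ x) :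
    Ric ξ x 3 3 = (-(2 * ξ (x 0) / x 0 - 1) - x 0 * Fd ξ (x 0) - 1) * Real.sin (x 2) ^ 2 := by
  have ht : x 0 ≠ 0 := ne_of_gt hx.1
  have hF : 2 * ξ (x 0) / x 0 - 1 ≠ 0 := Fne ξ x hx
  have hs : Real.sin (x 2) ≠ 0 := hx.2.2
  have Z233 : pd 2 (fun y => Cf ξ y 2 3 3) x
      = -(Real.cos (x 2) * Real.cos (x 2) + Real.sin (x 2) * -Real.sin (x 2)) :=
    pdC233 x hx
  have hcos : Real.cos (x 2) ^ 2 = 1 - Real.sin (x 2) ^ 2 := Real.cos_sq' (x 2)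
  simp only [Ric, Riem13, Fin.sum_univ_four, pd_chr hξ x hx]
  simp only [pdC1, pdC3, Z233, pdC033 hξ x hx]
  simp only [chr_eq hξ x hx]
  simp only [Cf, Matrix.cons_val_zero, Matrix.cons_val_one, Matrix.head_cons,
    Matrix.cons_val_two, Matrix.cons_val_three, Matrix.tail_cons, Matrix.vecHead,
    Matrix.vecTail, Function.comp_apply, Matrix.cons_val_succ, Matrix.cons_val]
  have h1 : 2 * ξ (x 0) - x 0 ≠ 0 := fun h => hx.2.1 (by linarith)
  have hGe : 2 * ξ (x 0) / x 0 - 1 = (2 * ξ (x 0) - x 0) / x 0 := by field_simp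
  simp only [hGe]
  field_simp
  ring_nf
  try simp only [hcos]
  try ring

end IBHaux
set_option maxHeartbeats 2000000 in
/-- the scalar curvature of the IBH metric. -/
theorem ibh_scalar_curvature (ξ : ℝ → ℝ) (hξ : ContDiff ℝ (⊤ : ℕ∞) ξ) (x : Pt)
    (hx : Dom ξ x) :
    scal ξ x = -(2 * (2 * deriv ξ (x 0) + x 0 * deriv (deriv ξ) (x 0))) / (x 0) ^ 2 := by
  have ht : x 0 ≠ 0 := ne_of_gt hx.1
  have hF : 2 * ξ (x 0) / x 0 - 1 ≠ 0 := IBHaux.Fne ξ x hx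
  have h1 : 2 * ξ (x 0) - x 0 ≠ 0 := fun h => hx.2.1 (by linarith)
  have hs : Real.sin (x 2) ≠ 0 := hx.2.2
  simp only [scal, Fin.sum_univ_four, IBHaux.gInv_eq ξ x hx]
  simp only [Fin.reduceEq, reduceIte, if_true, if_false]
  simp only [IBHaux.Ric00 hξ x hx, IBHaux.Ric11 hξ x hx, IBHaux.Ric22 hξ x hx,
    IBHaux.Ric33 hξ x hx]
  simp only [IBHaux.dv, IBHaux.Fd, IBHaux.Fdd, Matrix.cons_val_zero, Matrix.cons_val_one,
    Matrix.head_cons, Matrix.cons_val_two, Matrix.cons_val_three, Matrix.tail_cons,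
    Matrix.vecHead, Matrix.vecTail, Function.comp_apply, Matrix.cons_val_succ, Matrix.cons_val]
  have hGe : 2 * ξ (x 0) / x 0 - 1 = (2 * ξ (x 0) - x 0) / x 0 := by field_simp
  simp only [hGe]
  field_simp
  ring
end
end

section
/- The Ricci tensor S of the interior black hole spacetime satisfies the Einstein level-2 (Ein(2)) equation S² + λ₁ S + λ₂ g = 0, where S² denotes the (0,2)-tensor S_{ik} g^{kl} S_{lj}, λ₁ = (2ξ' + t ξ'')/t², and λ₂ = 2 ξ' ξ'' / t³. -/
noncomputable section
open Real

namespace IBH2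

def F (ξ : ℝ → ℝ) (s : ℝ) : ℝ := 2 * ξ s / s - 1
def F1 (ξ : ℝ → ℝ) (s : ℝ) : ℝ := 2 * deriv ξ s / s - 2 * ξ s / s ^ 2
def F2 (ξ : ℝ → ℝ) (s : ℝ) : ℝ :=
  2 * deriv (deriv ξ) s / s - 4 * deriv ξ s / s ^ 2 + 4 * ξ s / s ^ 3

def dv (ξ : ℝ → ℝ) (y : Pt) : Fin 4 → ℝ :=
  ![-(F ξ (y 0))⁻¹, F ξ (y 0), (y 0) ^ 2, (y 0) ^ 2 * Real.sin (y 2) ^ 2]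

lemma gM_eq (ξ : ℝ → ℝ) (y : Pt) (i j : Fin 4) :
    gM ξ y i j = if i = j then dv ξ y i else 0 := rfl

lemma hasDerivAt_F (ξ : ℝ → ℝ) (hξ : ContDiff ℝ (⊤ : ℕ∞) ξ) {s : ℝ} (hs : s ≠ 0) :
    HasDerivAt (F ξ) (F1 ξ s) s := by
  have h1 : HasDerivAt (fun u : ℝ => 2 * ξ u / u)
      ((2 * deriv ξ s * s - 2 * ξ s * 1) / s ^ 2) s :=
    (((hξ.differentiable (by simp) s).hasDerivAt.const_mul 2).div (hasDerivAt_id s) hs)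
  have := h1.sub_const 1
  refine this.congr_deriv ?_
  rw [F1]
  field_simp

lemma hasDerivAt_F1 (ξ : ℝ → ℝ) (hξ : ContDiff ℝ (⊤ : ℕ∞) ξ) {s : ℝ} (hs : s ≠ 0) :
    HasDerivAt (F1 ξ) (F2 ξ s) s := by
  have hd : Differentiable ℝ (deriv ξ) :=
    ((contDiff_infty_iff_deriv.mp (hξ.of_le (by simp))).2).differentiable (by simp)
  have h1 : HasDerivAt (fun u : ℝ => 2 * deriv ξ u / u)
      ((2 * deriv (deriv ξ) s * s - 2 * deriv ξ s * 1) / s ^ 2) s :=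
    ((hd s).hasDerivAt.const_mul 2).div (hasDerivAt_id s) hs
  have h2 : HasDerivAt (fun u : ℝ => 2 * ξ u / u ^ 2)
      ((2 * deriv ξ s * s ^ 2 - 2 * ξ s * (2 * s ^ 1)) / (s ^ 2) ^ 2) s :=
    ((hξ.differentiable (by simp) s).hasDerivAt.const_mul 2).div (hasDerivAt_pow 2 s)
      (pow_ne_zero 2 hs)
  have := h1.sub h2
  refine this.congr_deriv ?_
  rw [F2]
  field_simp
  ring

lemma continuousAt_F (ξ : ℝ → ℝ) (hξ : ContDiff ℝ (⊤ : ℕ∞) ξ) {s : ℝ} (hs : s ≠ 0) :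
    ContinuousAt (F ξ) s :=
  (hasDerivAt_F ξ hξ hs).continuousAt

lemma gInv_eq (ξ : ℝ → ℝ) (y : Pt) (h0 : y 0 ≠ 0) (hF : F ξ (y 0) ≠ 0)
    (hs : Real.sin (y 2) ≠ 0) (i j : Fin 4) :
    gInv ξ y i j = if i = j then (dv ξ y i)⁻¹ else 0 := by
  have hF' : 2 * ξ (y 0) - y 0 ≠ 0 := by
    intro h
    exact hF (by rw [F, show 2 * ξ (y 0) = y 0 by linarith, div_self h0, sub_self])
  have hmul : Matrix.of (gM ξ y) *
      Matrix.of (fun i j : Fin 4 => if i = j then (dv ξ y i)⁻¹ else 0) = 1 := by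
    ext i j
    fin_cases i <;> fin_cases j <;>
      simp [Matrix.mul_apply, Fin.sum_univ_four, gM, dv, F, Matrix.one_apply] <;>
      field_simp [hF', h0, hs] <;> ring
  rw [gInv, Matrix.inv_eq_right_inv hmul]
  rfl

end IBH2
namespace IBH2

lemma pd_gM_offdiag (ξ : ℝ → ℝ) (y : Pt) (i : Fin 4) {j k : Fin 4} (hjk : j ≠ k) :
    pd i (fun z => gM ξ z j k) y = 0 := by
  simp [pd, gM, if_neg hjk]

set_option maxHeartbeats 2000000 in
lemma pd_gM_diag (ξ : ℝ → ℝ) (hξ : ContDiff ℝ (⊤ : ℕ∞) ξ) (y : Pt) (h0 : y 0 ≠ 0)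
    (hF : F ξ (y 0) ≠ 0) (i d : Fin 4) :
    pd i (fun z => gM ξ z d d) y =
      (![![F1 ξ (y 0) / F ξ (y 0) ^ 2, F1 ξ (y 0), 2 * y 0, 2 * y 0 * Real.sin (y 2) ^ 2],
         ![0, 0, 0, 0],
         ![0, 0, 0, (y 0) ^ 2 * (2 * Real.sin (y 2) * Real.cos (y 2))],
         ![0, 0, 0, 0]] : Fin 4 → Fin 4 → ℝ) i d := by
  have hF' : HasDerivAt (F ξ) (F1 ξ (y 0)) (y 0) := hasDerivAt_F ξ hξ h0
  have h00 : HasDerivAt (fun s => -(2 * ξ s / s - 1)⁻¹) (F1 ξ (y 0) / F ξ (y 0) ^ 2) (y 0) := by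
    have := (hF'.inv hF).neg
    refine this.congr_deriv ?_
    rw [F]; ring
  have h33 : HasDerivAt (fun s : ℝ => s ^ 2 * Real.sin (y 2) ^ 2)
      (2 * y 0 * Real.sin (y 2) ^ 2) (y 0) := by
    have := (hasDerivAt_pow 2 (y 0)).mul_const (Real.sin (y 2) ^ 2)
    refine this.congr_deriv ?_; push_cast; ring
  have hth : HasDerivAt (fun s : ℝ => (y 0) ^ 2 * Real.sin s ^ 2)
      ((y 0) ^ 2 * (2 * Real.sin (y 2) * Real.cos (y 2))) (y 2) := by
    have := (((Real.hasDerivAt_sin (y 2)).pow 2)).const_mul ((y 0) ^ 2)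
    refine this.congr_deriv ?_; push_cast; ring
  have hp2 : HasDerivAt (fun s : ℝ => s ^ 2) (2 * y 0) (y 0) := by
    have := hasDerivAt_pow 2 (y 0); push_cast at this; refine this.congr_deriv ?_; ring
  fin_cases i <;> fin_cases d <;>
    first
      | (simp [pd, gM, Function.update_apply, Fin.ext_iff]; done)
      | (simp only [pd, gM, Function.update_apply, Fin.ext_iff]
         norm_num
         all_goals
           first
             | exact h00.deriv
             | exact hF'.deriv
             | exact hp2.deriv
             | exact h33.deriv
             | exact hth.deriv
             | (have h := hF'.add_const 1; simp only [F, sub_add_cancel] at h; exact h.deriv)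
             | (rw [show deriv (fun u : ℝ => (2 * ξ u / u - 1)⁻¹) (y 0)
                      = -F1 ξ (y 0) / F ξ (y 0) ^ 2 from (hF'.inv hF).deriv]; ring))

end IBH2
namespace IBH2

def Gv (ξ : ℝ → ℝ) (y : Pt) : Fin 4 → Fin 4 → Fin 4 → ℝ :=
![
  ![![-F1 ξ (y 0) / (2 * F ξ (y 0)), 0, 0, 0], ![0, F ξ (y 0) * F1 ξ (y 0) / 2, 0, 0], ![0, 0, F ξ (y 0) * y 0, 0], ![0, 0, 0, F ξ (y 0) * y 0 * Real.sin (y 2) ^ 2]],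
  ![![0, F1 ξ (y 0) / (2 * F ξ (y 0)), 0, 0], ![F1 ξ (y 0) / (2 * F ξ (y 0)), 0, 0, 0], ![0, 0, 0, 0], ![0, 0, 0, 0]],
  ![![0, 0, (y 0)⁻¹, 0], ![0, 0, 0, 0], ![(y 0)⁻¹, 0, 0, 0], ![0, 0, 0, -(Real.sin (y 2) * Real.cos (y 2))]],
  ![![0, 0, 0, (y 0)⁻¹], ![0, 0, 0, 0], ![0, 0, 0, Real.cos (y 2) / Real.sin (y 2)], ![(y 0)⁻¹, 0, Real.cos (y 2) / Real.sin (y 2), 0]]]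


lemma pd_gM (ξ : ℝ → ℝ) (hξ : ContDiff ℝ (⊤ : ℕ∞) ξ) (y : Pt) (h0 : y 0 ≠ 0)
    (hF : F ξ (y 0) ≠ 0) (i j k : Fin 4) :
    pd i (fun z => gM ξ z j k) y = if j = k then
      (![![F1 ξ (y 0) / F ξ (y 0) ^ 2, F1 ξ (y 0), 2 * y 0, 2 * y 0 * Real.sin (y 2) ^ 2],
         ![0, 0, 0, 0],
         ![0, 0, 0, (y 0) ^ 2 * (2 * Real.sin (y 2) * Real.cos (y 2))],
         ![0, 0, 0, 0]] : Fin 4 → Fin 4 → ℝ) i j else 0 := by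
  rcases eq_or_ne j k with rfl | h
  · rw [if_pos rfl]; exact pd_gM_diag ξ hξ y h0 hF i j
  · rw [if_neg h]; exact pd_gM_offdiag ξ y i h

set_option maxHeartbeats 4000000 in
lemma Chr_eq (ξ : ℝ → ℝ) (hξ : ContDiff ℝ (⊤ : ℕ∞) ξ) (y : Pt) (h0 : 0 < y 0)
    (hF : F ξ (y 0) ≠ 0) (hs : Real.sin (y 2) ≠ 0) (h i j : Fin 4) :
    Chr ξ y h i j = Gv ξ y h i j := by
  have h0' : y 0 ≠ 0 := ne_of_gt h0
  rw [Chr, Fin.sum_univ_four]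
  simp only [gInv_eq ξ y h0' hF hs, pd_gM ξ hξ y h0' hF]
  fin_cases h <;> fin_cases i <;> fin_cases j <;>
    · try simp [dv, Gv, Matrix.vecHead, Matrix.vecTail]
      all_goals try field_simp
      all_goals ring

end IBH2
namespace IBH2

def pdG (ξ : ℝ → ℝ) (y : Pt) : Fin 4 → Fin 4 → Fin 4 → Fin 4 → ℝ :=
![![
  ![![(F1 ξ (y 0) ^ 2 - F ξ (y 0) * F2 ξ (y 0)) / (2 * F ξ (y 0) ^ 2), 0, 0, 0], ![0, (F1 ξ (y 0) ^ 2 + F ξ (y 0) * F2 ξ (y 0)) / 2, 0, 0], ![0, 0, F1 ξ (y 0) * y 0 + F ξ (y 0), 0], ![0, 0, 0, (F1 ξ (y 0) * y 0 + F ξ (y 0)) * Real.sin (y 2) ^ 2]],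
  ![![0, (F2 ξ (y 0) * F ξ (y 0) - F1 ξ (y 0) ^ 2) / (2 * F ξ (y 0) ^ 2), 0, 0], ![(F2 ξ (y 0) * F ξ (y 0) - F1 ξ (y 0) ^ 2) / (2 * F ξ (y 0) ^ 2), 0, 0, 0], ![0, 0, 0, 0], ![0, 0, 0, 0]],
  ![![0, 0, -(y 0 ^ 2)⁻¹, 0], ![0, 0, 0, 0], ![-(y 0 ^ 2)⁻¹, 0, 0, 0], ![0, 0, 0, 0]],
  ![![0, 0, 0, -(y 0 ^ 2)⁻¹], ![0, 0, 0, 0], ![0, 0, 0, 0], ![-(y 0 ^ 2)⁻¹, 0, 0, 0]]],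
![
  ![![0, 0, 0, 0], ![0, 0, 0, 0], ![0, 0, 0, 0], ![0, 0, 0, 0]],
  ![![0, 0, 0, 0], ![0, 0, 0, 0], ![0, 0, 0, 0], ![0, 0, 0, 0]],
  ![![0, 0, 0, 0], ![0, 0, 0, 0], ![0, 0, 0, 0], ![0, 0, 0, 0]],
  ![![0, 0, 0, 0], ![0, 0, 0, 0], ![0, 0, 0, 0], ![0, 0, 0, 0]]],
![
  ![![0, 0, 0, 0], ![0, 0, 0, 0], ![0, 0, 0, 0], ![0, 0, 0, F ξ (y 0) * y 0 * (2 * Real.sin (y 2) * Real.cos (y 2))]],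
  ![![0, 0, 0, 0], ![0, 0, 0, 0], ![0, 0, 0, 0], ![0, 0, 0, 0]],
  ![![0, 0, 0, 0], ![0, 0, 0, 0], ![0, 0, 0, 0], ![0, 0, 0, Real.sin (y 2) ^ 2 - Real.cos (y 2) ^ 2]],
  ![![0, 0, 0, 0], ![0, 0, 0, 0], ![0, 0, 0, -(Real.sin (y 2) ^ 2)⁻¹], ![0, 0, -(Real.sin (y 2) ^ 2)⁻¹, 0]]],
![
  ![![0, 0, 0, 0], ![0, 0, 0, 0], ![0, 0, 0, 0], ![0, 0, 0, 0]],
  ![![0, 0, 0, 0], ![0, 0, 0, 0], ![0, 0, 0, 0], ![0, 0, 0, 0]],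
  ![![0, 0, 0, 0], ![0, 0, 0, 0], ![0, 0, 0, 0], ![0, 0, 0, 0]],
  ![![0, 0, 0, 0], ![0, 0, 0, 0], ![0, 0, 0, 0], ![0, 0, 0, 0]]]]


lemma update_self (x : Pt) (m : Fin 4) (s : ℝ) : Function.update x m s m = s :=
  Function.update_self m s x

set_option maxHeartbeats 4000000 in
lemma pd_Chr (ξ : ℝ → ℝ) (hξ : ContDiff ℝ (⊤ : ℕ∞) ξ) (x : Pt) (h0 : 0 < x 0)
    (hF : F ξ (x 0) ≠ 0) (hs : Real.sin (x 2) ≠ 0) (m a q r : Fin 4) :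
    pd m (fun y => Chr ξ y a q r) x = pdG ξ x m a q r := by
  have h0' : x 0 ≠ 0 := ne_of_gt h0
  have hF' : HasDerivAt (F ξ) (F1 ξ (x 0)) (x 0) := hasDerivAt_F ξ hξ h0'
  have hF1' : HasDerivAt (F1 ξ) (F2 ξ (x 0)) (x 0) := hasDerivAt_F1 ξ hξ h0'
  have h2F : 2 * F ξ (x 0) ≠ 0 := by simpa using hF
  have e1 : HasDerivAt (fun s => -F1 ξ s / (2 * F ξ s))
      ((F1 ξ (x 0) ^ 2 - F ξ (x 0) * F2 ξ (x 0)) / (2 * F ξ (x 0) ^ 2)) (x 0) := by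
    have := (hF1'.neg).div (hF'.const_mul 2) h2F
    refine this.congr_deriv ?_
    simp only [Pi.neg_apply]
    field_simp
    ring
  have e2 : HasDerivAt (fun s => F ξ s * F1 ξ s / 2)
      ((F1 ξ (x 0) ^ 2 + F ξ (x 0) * F2 ξ (x 0)) / 2) (x 0) := by
    have := (hF'.mul hF1').div_const 2
    refine this.congr_deriv ?_
    ring
  have e3 : HasDerivAt (fun s => F ξ s * s) (F1 ξ (x 0) * x 0 + F ξ (x 0)) (x 0) := by
    have := hF'.mul (hasDerivAt_id (x 0))
    refine this.congr_deriv ?_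
    simp [mul_comm]
  have e4 : HasDerivAt (fun s => F ξ s * s * Real.sin (x 2) ^ 2)
      ((F1 ξ (x 0) * x 0 + F ξ (x 0)) * Real.sin (x 2) ^ 2) (x 0) :=
    e3.mul_const _
  have e5 : HasDerivAt (fun s => F1 ξ s / (2 * F ξ s))
      ((F2 ξ (x 0) * F ξ (x 0) - F1 ξ (x 0) ^ 2) / (2 * F ξ (x 0) ^ 2)) (x 0) := by
    have := hF1'.div (hF'.const_mul 2) h2F
    refine this.congr_deriv ?_
    field_simp
  have e6 : HasDerivAt (fun s : ℝ => s⁻¹) (-(x 0 ^ 2)⁻¹) (x 0) := by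
    simpa using hasDerivAt_inv h0'
  have e7 : HasDerivAt (fun s => F ξ (x 0) * x 0 * Real.sin s ^ 2)
      (F ξ (x 0) * x 0 * (2 * Real.sin (x 2) * Real.cos (x 2))) (x 2) := by
    have := ((Real.hasDerivAt_sin (x 2)).pow 2).const_mul (F ξ (x 0) * x 0)
    refine this.congr_deriv ?_
    push_cast
    ring
  have e8 : HasDerivAt (fun s => -(Real.sin s * Real.cos s))
      (Real.sin (x 2) ^ 2 - Real.cos (x 2) ^ 2) (x 2) := by
    have := ((Real.hasDerivAt_sin (x 2)).mul (Real.hasDerivAt_cos (x 2))).neg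
    refine this.congr_deriv ?_
    ring
  have e9 : HasDerivAt (fun s => Real.cos s / Real.sin s) (-(Real.sin (x 2) ^ 2)⁻¹) (x 2) := by
    have := (Real.hasDerivAt_cos (x 2)).div (Real.hasDerivAt_sin (x 2)) hs
    refine this.congr_deriv ?_
    field_simp
    linear_combination (-1) * Real.sin_sq_add_cos_sq (x 2)
  fin_cases m
  · -- m = 0
    have h1 : ∀ᶠ s in nhds (x 0), 0 < s := eventually_gt_nhds h0
    have h2 : ∀ᶠ s in nhds (x 0), F ξ s ≠ 0 :=
      (continuousAt_F ξ hξ h0').eventually_ne hF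
    have hev : (fun s => Chr ξ (Function.update x 0 s) a q r)
        =ᶠ[nhds (x 0)] (fun s => Gv ξ (Function.update x 0 s) a q r) := by
      filter_upwards [h1, h2] with s hs1 hs2
      exact Chr_eq ξ hξ _ (by simpa using hs1) (by simpa using hs2)
        (by simpa [Function.update_apply] using hs) a q r
    show pd 0 (fun y => Chr ξ y a q r) x = pdG ξ x 0 a q r
    simp only [pd]
    rw [hev.deriv_eq]
    fin_cases a <;> fin_cases q <;> fin_cases r <;>
      · simp [Gv, pdG, Function.update_apply, Matrix.vecHead, Matrix.vecTail,
              e1.deriv, e2.deriv, e3.deriv, e4.deriv, e5.deriv, e6.deriv,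
              (hF'.mul hF1').deriv, hF'.deriv, hF1'.deriv]
        all_goals (field_simp; try ring)
  · -- m = 1
    have hconst : (fun s => Chr ξ (Function.update x 1 s) a q r) = fun _ => Gv ξ x a q r := by
      funext s
      rw [Chr_eq ξ hξ _ (by simpa [Function.update_apply] using h0)
        (by simpa [Function.update_apply] using hF)
        (by simpa [Function.update_apply] using hs)]
      simp [Gv, Function.update_apply]
    show pd 1 (fun y => Chr ξ y a q r) x = pdG ξ x 1 a q r
    simp only [pd]
    rw [hconst, deriv_const]
    fin_cases a <;> fin_cases q <;> fin_cases r <;> simp [pdG, Matrix.vecHead, Matrix.vecTail]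
  · -- m = 2
    have h2 : ∀ᶠ s in nhds (x 2), Real.sin s ≠ 0 :=
      (Real.continuous_sin.continuousAt).eventually_ne hs
    have hev : (fun s => Chr ξ (Function.update x 2 s) a q r)
        =ᶠ[nhds (x 2)] (fun s => Gv ξ (Function.update x 2 s) a q r) := by
      filter_upwards [h2] with s hs2
      exact Chr_eq ξ hξ _ (by simpa [Function.update_apply] using h0)
        (by simpa [Function.update_apply] using hF) (by simpa using hs2) a q r
    show pd 2 (fun y => Chr ξ y a q r) x = pdG ξ x 2 a q r
    simp only [pd]
    rw [hev.deriv_eq]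
    fin_cases a <;> fin_cases q <;> fin_cases r <;>
      · simp [Gv, pdG, Function.update_apply, Matrix.vecHead, Matrix.vecTail,
              e7.deriv, e8.deriv, e9.deriv,
              ((Real.hasDerivAt_sin (x 2)).mul (Real.hasDerivAt_cos (x 2))).deriv,
              ((Real.hasDerivAt_sin (x 2)).pow 2).deriv]
        all_goals (field_simp; try ring
                   try nlinarith [Real.sin_sq_add_cos_sq (x 2)])
  · -- m = 3
    have hconst : (fun s => Chr ξ (Function.update x 3 s) a q r) = fun _ => Gv ξ x a q r := by
      funext s
      rw [Chr_eq ξ hξ _ (by simpa [Function.update_apply] using h0)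
        (by simpa [Function.update_apply] using hF)
        (by simpa [Function.update_apply] using hs)]
      simp [Gv, Function.update_apply]
    show pd 3 (fun y => Chr ξ y a q r) x = pdG ξ x 3 a q r
    simp only [pd]
    rw [hconst, deriv_const]
    fin_cases a <;> fin_cases q <;> fin_cases r <;> simp [pdG, Matrix.vecHead, Matrix.vecTail]

end IBH2
namespace IBH2

def Rv (ξ : ℝ → ℝ) (x : Pt) : Fin 4 → ℝ :=
  ![deriv (deriv ξ) (x 0) / (x 0 * F ξ (x 0)),
    -(deriv (deriv ξ) (x 0)) * F ξ (x 0) / x 0,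
    -(2 * deriv ξ (x 0)),
    -(2 * deriv ξ (x 0)) * Real.sin (x 2) ^ 2]

set_option maxHeartbeats 4000000 in
lemma Ric_eq (ξ : ℝ → ℝ) (hξ : ContDiff ℝ (⊤ : ℕ∞) ξ) (x : Pt) (h0 : 0 < x 0)
    (hF : F ξ (x 0) ≠ 0) (hs : Real.sin (x 2) ≠ 0) (i j : Fin 4) :
    Ric ξ x i j = if i = j then Rv ξ x i else 0 := by
  have h0' : x 0 ≠ 0 := ne_of_gt h0
  have hF2 : 2 * ξ (x 0) - x 0 ≠ 0 := by
    intro h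
    exact hF (by rw [F, show 2 * ξ (x 0) = x 0 by linarith, div_self h0', sub_self])
  rw [Ric, Fin.sum_univ_four]
  simp only [Riem13]
  simp only [pd_Chr ξ hξ x h0 hF hs, Chr_eq ξ hξ x h0 hF hs, Fin.sum_univ_four]
  fin_cases i <;> fin_cases j <;>
    · simp [pdG, Gv, Rv, Matrix.vecHead, Matrix.vecTail, F, F1, F2, Real.cos_sq']
      all_goals field_simp [hF2]
      all_goals try ring
      all_goals (simp only [Real.cos_sq']; ring)

end IBH2
/-- the IBH spacetime is Einstein of level 2:
`S² + λ₁ S + λ₂ g = 0` with `λ₁ = (2ξ' + tξ'')/t²`, `λ₂ = 2ξ'ξ''/t³`. -/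
theorem ibh_Ein2 (ξ : ℝ → ℝ) (hξ : ContDiff ℝ (⊤ : ℕ∞) ξ) (x : Pt) (hx : Dom ξ x) :
    ∀ i j : Fin 4,
      (∑ k : Fin 4, ∑ l : Fin 4, Ric ξ x i k * gInv ξ x k l * Ric ξ x l j)
        + ((2 * deriv ξ (x 0) + x 0 * deriv (deriv ξ) (x 0)) / (x 0) ^ 2) * Ric ξ x i j
        + (2 * deriv ξ (x 0) * deriv (deriv ξ) (x 0) / (x 0) ^ 3) * gM ξ x i j = 0 := by
  obtain ⟨h0, hne, hs⟩ := hx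
  have h0' : x 0 ≠ 0 := ne_of_gt h0
  have hF : IBH2.F ξ (x 0) ≠ 0 := by
    intro h
    rw [IBH2.F, sub_eq_zero, div_eq_one_iff_eq h0'] at h
    exact hne h.symm
  intro i j
  simp only [Fin.sum_univ_four]
  simp only [IBH2.Ric_eq ξ hξ x h0 hF hs, IBH2.gInv_eq ξ x h0' hF hs, IBH2.gM_eq]
  fin_cases i <;> fin_cases j <;>
    · simp [IBH2.Rv, IBH2.dv, Matrix.vecHead, Matrix.vecTail]
      all_goals field_simp
      all_goals ring
end
end

section
/- If ξ(t) = C₂ t² + C₃ t³ for constants C₂, C₃, then in the interior black hole spacetime the conformal curvature tensor annihilates the energy-momentum tensor: C · T = 0. -/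
noncomputable section
open Real

namespace IBH

/-- `ψ(t) = 2ξ(t)/t - 1` as a polynomial (for `ξ = C₂t² + C₃t³`). -/
def Pf (C₂ C₃ t : ℝ) : ℝ := 2*C₂*t + 2*C₃*t^2 - 1
/-- derivative of `Pf`. -/
def Pd (C₂ C₃ t : ℝ) : ℝ := 2*C₂ + 4*C₃*t

lemma hasDerivAt_Pf (C₂ C₃ t : ℝ) : HasDerivAt (Pf C₂ C₃) (Pd C₂ C₃ t) t := by
  have h : HasDerivAt (fun s : ℝ => 2*C₂*s + 2*C₃*s^2 - 1)
      (2*C₂*1 + 2*C₃*(2*t^1)) t := by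
    exact (((hasDerivAt_id t).const_mul (2*C₂)).add
      ((hasDerivAt_pow 2 t).const_mul (2*C₃))).sub_const 1
  exact h.congr_deriv (by unfold Pd; ring)

lemma hasDerivAt_Pd (C₂ C₃ t : ℝ) : HasDerivAt (Pd C₂ C₃) (4*C₃) t := by
  have h : HasDerivAt (fun s : ℝ => 2*C₂ + 4*C₃*s) (4*C₃) t := by
    simpa using ((hasDerivAt_id t).const_mul (4*C₃)).const_add (2*C₂)
  exact h

variable (C₂ C₃ : ℝ)

local notation "ξ" => (fun t => C₂ * t ^ 2 + C₃ * t ^ 3)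

lemma gM_eq_s10 (y : Pt) (hy : y 0 ≠ 0) :
    gM ξ y = fun i j => if i = j then
      (![-(Pf C₂ C₃ (y 0))⁻¹, Pf C₂ C₃ (y 0), (y 0)^2,
         (y 0)^2 * Real.sin (y 2)^2] : Fin 4 → ℝ) i else 0 := by
  have h : 2 * (C₂ * (y 0) ^ 2 + C₃ * (y 0) ^ 3) / y 0 - 1 = Pf C₂ C₃ (y 0) := by
    rw [div_sub_one hy, div_eq_iff hy]; unfold Pf; ring
  funext i j
  simp only [gM, h]

end IBH
namespace IBH2
open IBH
variable (C₂ C₃ : ℝ)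
local notation "ξ" => (fun t => C₂ * t ^ 2 + C₃ * t ^ 3)

lemma pd_indep {i : Fin 4} {f : Pt → ℝ} {x : Pt}
    (h : ∀ s, f (Function.update x i s) = f x) : pd i f x = 0 := by
  unfold pd
  rw [show (fun s => f (Function.update x i s)) = fun _ => f x from funext h]
  exact deriv_const _ _

lemma pd00 (x : Pt) (hne : x 0 ≠ 0) (hP : Pf C₂ C₃ (x 0) ≠ 0) :
    pd 0 (fun y => gM ξ y 0 0) x = Pd C₂ C₃ (x 0) / (Pf C₂ C₃ (x 0))^2 := by
  have e : pd 0 (fun y => gM ξ y 0 0) x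
      = deriv (fun s => gM ξ (Function.update x 0 s) 0 0) (x 0) := rfl
  rw [e]
  have hev : (fun s => gM ξ (Function.update x 0 s) 0 0)
      =ᶠ[nhds (x 0)] (fun s => -(Pf C₂ C₃ s)⁻¹) := by
    filter_upwards [eventually_ne_nhds hne] with s hs
    simp only [gM, Function.update_self, if_pos rfl, Matrix.cons_val_zero, if_true]
    rw [show 2 * (C₂ * s ^ 2 + C₃ * s ^ 3) / s - 1 = Pf C₂ C₃ s by
      rw [div_sub_one hs, div_eq_iff hs]; unfold Pf; ring]
  rw [hev.deriv_eq]
  have h := ((hasDerivAt_Pf C₂ C₃ (x 0)).inv hP).neg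
  rw [show deriv (fun s => -(Pf C₂ C₃ s)⁻¹) (x 0) = _ from h.deriv]; ring

lemma pd11 (x : Pt) (hne : x 0 ≠ 0) :
    pd 0 (fun y => gM ξ y 1 1) x = Pd C₂ C₃ (x 0) := by
  have e : pd 0 (fun y => gM ξ y 1 1) x
      = deriv (fun s => gM ξ (Function.update x 0 s) 1 1) (x 0) := rfl
  rw [e]
  have hev : (fun s => gM ξ (Function.update x 0 s) 1 1)
      =ᶠ[nhds (x 0)] (fun s => Pf C₂ C₃ s) := by
    filter_upwards [eventually_ne_nhds hne] with s hs
    rw [gM_eq_s10 C₂ C₃ _ (by simpa using hs)]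
    simp [Function.update_self]
  rw [hev.deriv_eq]
  exact (hasDerivAt_Pf C₂ C₃ (x 0)).deriv

lemma pd22 (x : Pt) : pd 0 (fun y => gM ξ y 2 2) x = 2 * x 0 := by
  have e : pd 0 (fun y => gM ξ y 2 2) x
      = deriv (fun s => gM ξ (Function.update x 0 s) 2 2) (x 0) := rfl
  rw [e, show (fun s => gM ξ (Function.update x 0 s) 2 2) = fun s => s^2 from
    funext fun s => by simp [gM]]
  simpa using (hasDerivAt_pow 2 (x 0)).deriv

lemma pd33t (x : Pt) :
    pd 0 (fun y => gM ξ y 3 3) x = 2 * x 0 * Real.sin (x 2)^2 := by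
  have e : pd 0 (fun y => gM ξ y 3 3) x
      = deriv (fun s => gM ξ (Function.update x 0 s) 3 3) (x 0) := rfl
  rw [e, show (fun s => gM ξ (Function.update x 0 s) 3 3)
      = fun s => s^2 * Real.sin (x 2)^2 from
    funext fun s => by simp [gM, Function.update_apply]]
  rw [((hasDerivAt_pow 2 (x 0)).mul_const (Real.sin (x 2)^2)).deriv]
  norm_num
  all_goals ring

lemma pd33θ (x : Pt) :
    pd 2 (fun y => gM ξ y 3 3) x
      = (x 0)^2 * (2 * Real.sin (x 2) * Real.cos (x 2)) := by
  have e : pd 2 (fun y => gM ξ y 3 3) x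
      = deriv (fun s => gM ξ (Function.update x 2 s) 3 3) (x 2) := rfl
  rw [e, show (fun s => gM ξ (Function.update x 2 s) 3 3)
      = fun s => ((x 0)^2) * Real.sin s ^2 from
    funext fun s => by simp [gM, Function.update_apply]]
  rw [show deriv (fun s => (x 0)^2 * Real.sin s ^ 2) (x 2) = _ from
    (((Real.hasDerivAt_sin (x 2)).pow 2).const_mul ((x 0)^2)).deriv]
  norm_num
  all_goals ring

/-- table of coordinate derivatives of the metric -/
def pdgE (C₂ C₃ t θ : ℝ) (i j k : Fin 4) : ℝ :=
  if i = 0 ∧ j = 0 ∧ k = 0 then Pd C₂ C₃ t / (Pf C₂ C₃ t)^2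
  else if i = 0 ∧ j = 1 ∧ k = 1 then Pd C₂ C₃ t
  else if i = 0 ∧ j = 2 ∧ k = 2 then 2*t
  else if i = 0 ∧ j = 3 ∧ k = 3 then 2*t*Real.sin θ^2
  else if i = 2 ∧ j = 3 ∧ k = 3 then t^2*(2*Real.sin θ*Real.cos θ)
  else 0


set_option maxHeartbeats 2000000 in
lemma pd_gM_s10 (x : Pt) (ht : 0 < x 0) (hP : Pf C₂ C₃ (x 0) ≠ 0)
    (i j k : Fin 4) :
    pd i (fun y => gM ξ y j k) x = pdgE C₂ C₃ (x 0) (x 2) i j k := by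
  have hne : x 0 ≠ 0 := ne_of_gt ht
  fin_cases i <;> fin_cases j <;> fin_cases k
  · norm_num [pdgE]; exact pd00 C₂ C₃ x hne hP
  · norm_num [pdgE]; exact pd_indep (fun s => by simp [gM, Function.update_apply])
  · norm_num [pdgE]; exact pd_indep (fun s => by simp [gM, Function.update_apply])
  · norm_num [pdgE]; exact pd_indep (fun s => by simp [gM, Function.update_apply])
  · norm_num [pdgE]; exact pd_indep (fun s => by simp [gM, Function.update_apply])
  · norm_num [pdgE]; exact pd11 C₂ C₃ x hne
  · norm_num [pdgE]; exact pd_indep (fun s => by simp [gM, Function.update_apply])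
  · norm_num [pdgE]; exact pd_indep (fun s => by simp [gM, Function.update_apply])
  · norm_num [pdgE]; exact pd_indep (fun s => by simp [gM, Function.update_apply])
  · norm_num [pdgE]; exact pd_indep (fun s => by simp [gM, Function.update_apply])
  · norm_num [pdgE]; exact pd22 C₂ C₃ x
  · norm_num [pdgE]; exact pd_indep (fun s => by simp [gM, Function.update_apply])
  · norm_num [pdgE]; exact pd_indep (fun s => by simp [gM, Function.update_apply])
  · norm_num [pdgE]; exact pd_indep (fun s => by simp [gM, Function.update_apply])
  · norm_num [pdgE]; exact pd_indep (fun s => by simp [gM, Function.update_apply])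
  · norm_num [pdgE]; exact pd33t C₂ C₃ x
  · norm_num [pdgE]; exact pd_indep (fun s => by simp [gM, Function.update_apply])
  · norm_num [pdgE]; exact pd_indep (fun s => by simp [gM, Function.update_apply])
  · norm_num [pdgE]; exact pd_indep (fun s => by simp [gM, Function.update_apply])
  · norm_num [pdgE]; exact pd_indep (fun s => by simp [gM, Function.update_apply])
  · norm_num [pdgE]; exact pd_indep (fun s => by simp [gM, Function.update_apply])
  · norm_num [pdgE]; exact pd_indep (fun s => by simp [gM, Function.update_apply])
  · norm_num [pdgE]; exact pd_indep (fun s => by simp [gM, Function.update_apply])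
  · norm_num [pdgE]; exact pd_indep (fun s => by simp [gM, Function.update_apply])
  · norm_num [pdgE]; exact pd_indep (fun s => by simp [gM, Function.update_apply])
  · norm_num [pdgE]; exact pd_indep (fun s => by simp [gM, Function.update_apply])
  · norm_num [pdgE]; exact pd_indep (fun s => by simp [gM, Function.update_apply])
  · norm_num [pdgE]; exact pd_indep (fun s => by simp [gM, Function.update_apply])
  · norm_num [pdgE]; exact pd_indep (fun s => by simp [gM, Function.update_apply])
  · norm_num [pdgE]; exact pd_indep (fun s => by simp [gM, Function.update_apply])
  · norm_num [pdgE]; exact pd_indep (fun s => by simp [gM, Function.update_apply])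
  · norm_num [pdgE]; exact pd_indep (fun s => by simp [gM, Function.update_apply])
  · norm_num [pdgE]; exact pd_indep (fun s => by simp [gM, Function.update_apply])
  · norm_num [pdgE]; exact pd_indep (fun s => by simp [gM, Function.update_apply])
  · norm_num [pdgE]; exact pd_indep (fun s => by simp [gM, Function.update_apply])
  · norm_num [pdgE]; exact pd_indep (fun s => by simp [gM, Function.update_apply])
  · norm_num [pdgE]; exact pd_indep (fun s => by simp [gM, Function.update_apply])
  · norm_num [pdgE]; exact pd_indep (fun s => by simp [gM, Function.update_apply])
  · norm_num [pdgE]; exact pd_indep (fun s => by simp [gM, Function.update_apply])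
  · norm_num [pdgE]; exact pd_indep (fun s => by simp [gM, Function.update_apply])
  · norm_num [pdgE]; exact pd_indep (fun s => by simp [gM, Function.update_apply])
  · norm_num [pdgE]; exact pd_indep (fun s => by simp [gM, Function.update_apply])
  · norm_num [pdgE]; exact pd_indep (fun s => by simp [gM, Function.update_apply])
  · norm_num [pdgE]; exact pd_indep (fun s => by simp [gM, Function.update_apply])
  · norm_num [pdgE]; exact pd_indep (fun s => by simp [gM, Function.update_apply])
  · norm_num [pdgE]; exact pd_indep (fun s => by simp [gM, Function.update_apply])
  · norm_num [pdgE]; exact pd_indep (fun s => by simp [gM, Function.update_apply])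
  · norm_num [pdgE]; exact pd33θ C₂ C₃ x
  · norm_num [pdgE]; exact pd_indep (fun s => by simp [gM, Function.update_apply])
  · norm_num [pdgE]; exact pd_indep (fun s => by simp [gM, Function.update_apply])
  · norm_num [pdgE]; exact pd_indep (fun s => by simp [gM, Function.update_apply])
  · norm_num [pdgE]; exact pd_indep (fun s => by simp [gM, Function.update_apply])
  · norm_num [pdgE]; exact pd_indep (fun s => by simp [gM, Function.update_apply])
  · norm_num [pdgE]; exact pd_indep (fun s => by simp [gM, Function.update_apply])
  · norm_num [pdgE]; exact pd_indep (fun s => by simp [gM, Function.update_apply])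
  · norm_num [pdgE]; exact pd_indep (fun s => by simp [gM, Function.update_apply])
  · norm_num [pdgE]; exact pd_indep (fun s => by simp [gM, Function.update_apply])
  · norm_num [pdgE]; exact pd_indep (fun s => by simp [gM, Function.update_apply])
  · norm_num [pdgE]; exact pd_indep (fun s => by simp [gM, Function.update_apply])
  · norm_num [pdgE]; exact pd_indep (fun s => by simp [gM, Function.update_apply])
  · norm_num [pdgE]; exact pd_indep (fun s => by simp [gM, Function.update_apply])
  · norm_num [pdgE]; exact pd_indep (fun s => by simp [gM, Function.update_apply])
  · norm_num [pdgE]; exact pd_indep (fun s => by simp [gM, Function.update_apply])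
  · norm_num [pdgE]; exact pd_indep (fun s => by simp [gM, Function.update_apply])

end IBH2
namespace IBH3
open IBH IBH2
variable (C₂ C₃ : ℝ)
local notation "ξ" => (fun t => C₂ * t ^ 2 + C₃ * t ^ 3)

/-- explicit inverse metric -/
def gIE (C₂ C₃ t θ : ℝ) (i j : Fin 4) : ℝ :=
  if i = 0 ∧ j = 0 then -(Pf C₂ C₃ t)
  else if i = 1 ∧ j = 1 then (Pf C₂ C₃ t)⁻¹
  else if i = 2 ∧ j = 2 then (t^2)⁻¹
  else if i = 3 ∧ j = 3 then (t^2 * Real.sin θ^2)⁻¹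
  else 0

set_option maxHeartbeats 1000000 in
lemma gInv_eq (y : Pt) (ht : 0 < y 0) (hP : Pf C₂ C₃ (y 0) ≠ 0)
    (hs : Real.sin (y 2) ≠ 0) (i j : Fin 4) :
    gInv ξ y i j = gIE C₂ C₃ (y 0) (y 2) i j := by
  have hne : y 0 ≠ 0 := ne_of_gt ht
  have hABe : Matrix.of (gM ξ y) * Matrix.of (fun i j => gIE C₂ C₃ (y 0) (y 2) i j) = 1 := by
    ext a b
    rw [Matrix.mul_apply, Fin.sum_univ_four]
    fin_cases a <;> fin_cases b <;>
      simp [gM_eq_s10 C₂ C₃ y hne, gIE, Matrix.one_apply] <;>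
      field_simp <;> ring
  have : (Matrix.of (gM ξ y))⁻¹ = Matrix.of (fun i j => gIE C₂ C₃ (y 0) (y 2) i j) :=
    Matrix.inv_eq_right_inv hABe
  show (Matrix.of (gM ξ y))⁻¹ i j = _
  rw [this]; rfl

end IBH3
namespace IBH4
open IBH IBH2 IBH3
variable (C₂ C₃ : ℝ)
local notation "ξ" => (fun t => C₂ * t ^ 2 + C₃ * t ^ 3)

/-- explicit Christoffel symbols -/
def chrE (C₂ C₃ t θ : ℝ) (h i j : Fin 4) : ℝ :=
  if h = 0 ∧ i = 0 ∧ j = 0 then -(Pd C₂ C₃ t)/(2*Pf C₂ C₃ t)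
  else if h = 0 ∧ i = 1 ∧ j = 1 then Pf C₂ C₃ t * Pd C₂ C₃ t/2
  else if h = 0 ∧ i = 2 ∧ j = 2 then t * Pf C₂ C₃ t
  else if h = 0 ∧ i = 3 ∧ j = 3 then t * Pf C₂ C₃ t * Real.sin θ^2
  else if h = 1 ∧ ((i = 0 ∧ j = 1) ∨ (i = 1 ∧ j = 0)) then Pd C₂ C₃ t/(2*Pf C₂ C₃ t)
  else if h = 2 ∧ ((i = 0 ∧ j = 2) ∨ (i = 2 ∧ j = 0)) then t⁻¹
  else if h = 2 ∧ i = 3 ∧ j = 3 then -(Real.sin θ*Real.cos θ)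
  else if h = 3 ∧ ((i = 0 ∧ j = 3) ∨ (i = 3 ∧ j = 0)) then t⁻¹
  else if h = 3 ∧ ((i = 2 ∧ j = 3) ∨ (i = 3 ∧ j = 2)) then Real.cos θ/Real.sin θ
  else 0

set_option maxHeartbeats 1000000 in
lemma chr_eq (y : Pt) (ht : 0 < y 0) (hP : Pf C₂ C₃ (y 0) ≠ 0)
    (hs : Real.sin (y 2) ≠ 0) (h i j : Fin 4) :
    Chr ξ y h i j = chrE C₂ C₃ (y 0) (y 2) h i j := by
  have hne : y 0 ≠ 0 := ne_of_gt ht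
  unfold Chr
  rw [Fin.sum_univ_four]
  simp only [gInv_eq C₂ C₃ y ht hP hs, pd_gM_s10 C₂ C₃ y ht hP]
  fin_cases h <;> fin_cases i <;> fin_cases j <;>
    simp [pdgE, gIE, chrE] <;> field_simp <;> ring

end IBH4
namespace IBH5
open IBH IBH2 IBH3 IBH4
variable (C₂ C₃ : ℝ)
local notation "ξ" => (fun t => C₂ * t ^ 2 + C₃ * t ^ 3)

/-- table of coordinate derivatives of the Christoffels -/
def pdcE (C₂ C₃ t θ : ℝ) (i a q r : Fin 4) : ℝ :=
  if i = 0 then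
    (if a = 0 ∧ q = 0 ∧ r = 0 then
      ((-(4*C₃))*(2*Pf C₂ C₃ t) - (-(Pd C₂ C₃ t))*(2*Pd C₂ C₃ t))/(2*Pf C₂ C₃ t)^2
    else if a = 0 ∧ q = 1 ∧ r = 1 then (Pd C₂ C₃ t*Pd C₂ C₃ t + Pf C₂ C₃ t*(4*C₃))/2
    else if a = 0 ∧ q = 2 ∧ r = 2 then 1*Pf C₂ C₃ t + t*Pd C₂ C₃ t
    else if a = 0 ∧ q = 3 ∧ r = 3 then (1*Pf C₂ C₃ t + t*Pd C₂ C₃ t)*Real.sin θ^2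
    else if a = 1 ∧ ((q = 0 ∧ r = 1) ∨ (q = 1 ∧ r = 0)) then
      ((4*C₃)*(2*Pf C₂ C₃ t) - Pd C₂ C₃ t*(2*Pd C₂ C₃ t))/(2*Pf C₂ C₃ t)^2
    else if (a = 2 ∧ ((q = 0 ∧ r = 2) ∨ (q = 2 ∧ r = 0)))
        ∨ (a = 3 ∧ ((q = 0 ∧ r = 3) ∨ (q = 3 ∧ r = 0))) then -(t^2)⁻¹
    else 0)
  else if i = 2 then
    (if a = 0 ∧ q = 3 ∧ r = 3 then t*Pf C₂ C₃ t*(2*Real.sin θ^1*Real.cos θ)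
    else if a = 2 ∧ q = 3 ∧ r = 3 then
      -(Real.cos θ*Real.cos θ + Real.sin θ*(-Real.sin θ))
    else if a = 3 ∧ ((q = 2 ∧ r = 3) ∨ (q = 3 ∧ r = 2)) then
      (-Real.sin θ*Real.sin θ - Real.cos θ*Real.cos θ)/Real.sin θ^2
    else 0)
  else 0

set_option maxHeartbeats 2000000 in
lemma deriv_chrE_t (t θ : ℝ) (hne : t ≠ 0) (hP : Pf C₂ C₃ t ≠ 0) (a q r : Fin 4) :
    deriv (fun s => chrE C₂ C₃ s θ a q r) t = pdcE C₂ C₃ t θ 0 a q r := by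
  fin_cases a <;> fin_cases q <;> fin_cases r
  · show deriv (fun s => chrE C₂ C₃ s θ 0 0 0) t = pdcE C₂ C₃ t θ 0 0 0 0
    rw [show (fun s => chrE C₂ C₃ s θ 0 0 0) = (fun s => -(Pd C₂ C₃ s)/(2*Pf C₂ C₃ s)) from
        funext fun s => by simp (config := { decide := true }) [chrE]]
    have h := ((hasDerivAt_Pd C₂ C₃ t).neg).div ((hasDerivAt_Pf C₂ C₃ t).const_mul 2) (mul_ne_zero two_ne_zero hP)
    rw [show deriv (fun s => -(Pd C₂ C₃ s)/(2*Pf C₂ C₃ s)) t = _ from h.deriv]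
    simp (config := { decide := true }) [pdcE]
    all_goals ring
  · simp (config := { decide := true }) [chrE, pdcE]
  · simp (config := { decide := true }) [chrE, pdcE]
  · simp (config := { decide := true }) [chrE, pdcE]
  · simp (config := { decide := true }) [chrE, pdcE]
  · show deriv (fun s => chrE C₂ C₃ s θ 0 1 1) t = pdcE C₂ C₃ t θ 0 0 1 1
    rw [show (fun s => chrE C₂ C₃ s θ 0 1 1) = (fun s => Pf C₂ C₃ s * Pd C₂ C₃ s/2) from
        funext fun s => by simp (config := { decide := true }) [chrE]]
    have h := ((hasDerivAt_Pf C₂ C₃ t).mul (hasDerivAt_Pd C₂ C₃ t)).div_const 2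
    rw [show deriv (fun s => Pf C₂ C₃ s * Pd C₂ C₃ s/2) t = _ from h.deriv]
    simp (config := { decide := true }) [pdcE]
    all_goals ring
  · simp (config := { decide := true }) [chrE, pdcE]
  · simp (config := { decide := true }) [chrE, pdcE]
  · simp (config := { decide := true }) [chrE, pdcE]
  · simp (config := { decide := true }) [chrE, pdcE]
  · show deriv (fun s => chrE C₂ C₃ s θ 0 2 2) t = pdcE C₂ C₃ t θ 0 0 2 2
    rw [show (fun s => chrE C₂ C₃ s θ 0 2 2) = (fun s => s * Pf C₂ C₃ s) from
        funext fun s => by simp (config := { decide := true }) [chrE]]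
    have h : HasDerivAt (fun s => s * Pf C₂ C₃ s) (1 * Pf C₂ C₃ t + t * Pd C₂ C₃ t) t :=
      (hasDerivAt_id t).mul (hasDerivAt_Pf C₂ C₃ t)
    rw [h.deriv]
    simp (config := { decide := true }) [pdcE]
    all_goals ring
  · simp (config := { decide := true }) [chrE, pdcE]
  · simp (config := { decide := true }) [chrE, pdcE]
  · simp (config := { decide := true }) [chrE, pdcE]
  · simp (config := { decide := true }) [chrE, pdcE]
  · show deriv (fun s => chrE C₂ C₃ s θ 0 3 3) t = pdcE C₂ C₃ t θ 0 0 3 3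
    rw [show (fun s => chrE C₂ C₃ s θ 0 3 3) = (fun s => s * Pf C₂ C₃ s * Real.sin θ^2) from
        funext fun s => by simp (config := { decide := true }) [chrE]]
    have h : HasDerivAt (fun s => s * Pf C₂ C₃ s * Real.sin θ^2)
        ((1 * Pf C₂ C₃ t + t * Pd C₂ C₃ t) * Real.sin θ^2) t :=
      ((hasDerivAt_id t).mul (hasDerivAt_Pf C₂ C₃ t)).mul_const (Real.sin θ^2)
    rw [h.deriv]
    simp (config := { decide := true }) [pdcE]
    all_goals ring
  · simp (config := { decide := true }) [chrE, pdcE]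
  · show deriv (fun s => chrE C₂ C₃ s θ 1 0 1) t = pdcE C₂ C₃ t θ 0 1 0 1
    rw [show (fun s => chrE C₂ C₃ s θ 1 0 1) = (fun s => Pd C₂ C₃ s/(2*Pf C₂ C₃ s)) from
        funext fun s => by simp (config := { decide := true }) [chrE]]
    have h := (hasDerivAt_Pd C₂ C₃ t).div ((hasDerivAt_Pf C₂ C₃ t).const_mul 2) (mul_ne_zero two_ne_zero hP)
    rw [show deriv (fun s => Pd C₂ C₃ s/(2*Pf C₂ C₃ s)) t = _ from h.deriv]
    simp (config := { decide := true }) [pdcE]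
    all_goals ring
  · simp (config := { decide := true }) [chrE, pdcE]
  · simp (config := { decide := true }) [chrE, pdcE]
  · show deriv (fun s => chrE C₂ C₃ s θ 1 1 0) t = pdcE C₂ C₃ t θ 0 1 1 0
    rw [show (fun s => chrE C₂ C₃ s θ 1 1 0) = (fun s => Pd C₂ C₃ s/(2*Pf C₂ C₃ s)) from
        funext fun s => by simp (config := { decide := true }) [chrE]]
    have h := (hasDerivAt_Pd C₂ C₃ t).div ((hasDerivAt_Pf C₂ C₃ t).const_mul 2) (mul_ne_zero two_ne_zero hP)
    rw [show deriv (fun s => Pd C₂ C₃ s/(2*Pf C₂ C₃ s)) t = _ from h.deriv]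
    simp (config := { decide := true }) [pdcE]
    all_goals ring
  · simp (config := { decide := true }) [chrE, pdcE]
  · simp (config := { decide := true }) [chrE, pdcE]
  · simp (config := { decide := true }) [chrE, pdcE]
  · simp (config := { decide := true }) [chrE, pdcE]
  · simp (config := { decide := true }) [chrE, pdcE]
  · simp (config := { decide := true }) [chrE, pdcE]
  · simp (config := { decide := true }) [chrE, pdcE]
  · simp (config := { decide := true }) [chrE, pdcE]
  · simp (config := { decide := true }) [chrE, pdcE]
  · simp (config := { decide := true }) [chrE, pdcE]
  · simp (config := { decide := true }) [chrE, pdcE]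
  · simp (config := { decide := true }) [chrE, pdcE]
  · simp (config := { decide := true }) [chrE, pdcE]
  · show deriv (fun s => chrE C₂ C₃ s θ 2 0 2) t = pdcE C₂ C₃ t θ 0 2 0 2
    rw [show (fun s => chrE C₂ C₃ s θ 2 0 2) = (fun s => s⁻¹) from
        funext fun s => by simp (config := { decide := true }) [chrE]]
    have h := hasDerivAt_inv hne
    rw [h.deriv]
    simp (config := { decide := true }) [pdcE]
    all_goals ring
  · simp (config := { decide := true }) [chrE, pdcE]
  · simp (config := { decide := true }) [chrE, pdcE]
  · simp (config := { decide := true }) [chrE, pdcE]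
  · simp (config := { decide := true }) [chrE, pdcE]
  · simp (config := { decide := true }) [chrE, pdcE]
  · show deriv (fun s => chrE C₂ C₃ s θ 2 2 0) t = pdcE C₂ C₃ t θ 0 2 2 0
    rw [show (fun s => chrE C₂ C₃ s θ 2 2 0) = (fun s => s⁻¹) from
        funext fun s => by simp (config := { decide := true }) [chrE]]
    have h := hasDerivAt_inv hne
    rw [h.deriv]
    simp (config := { decide := true }) [pdcE]
    all_goals ring
  · simp (config := { decide := true }) [chrE, pdcE]
  · simp (config := { decide := true }) [chrE, pdcE]
  · simp (config := { decide := true }) [chrE, pdcE]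
  · simp (config := { decide := true }) [chrE, pdcE]
  · simp (config := { decide := true }) [chrE, pdcE]
  · simp (config := { decide := true }) [chrE, pdcE]
  · simp (config := { decide := true }) [chrE, pdcE]
  · simp (config := { decide := true }) [chrE, pdcE]
  · simp (config := { decide := true }) [chrE, pdcE]
  · simp (config := { decide := true }) [chrE, pdcE]
  · show deriv (fun s => chrE C₂ C₃ s θ 3 0 3) t = pdcE C₂ C₃ t θ 0 3 0 3
    rw [show (fun s => chrE C₂ C₃ s θ 3 0 3) = (fun s => s⁻¹) from
        funext fun s => by simp (config := { decide := true }) [chrE]]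
    have h := hasDerivAt_inv hne
    rw [h.deriv]
    simp (config := { decide := true }) [pdcE]
    all_goals ring
  · simp (config := { decide := true }) [chrE, pdcE]
  · simp (config := { decide := true }) [chrE, pdcE]
  · simp (config := { decide := true }) [chrE, pdcE]
  · simp (config := { decide := true }) [chrE, pdcE]
  · simp (config := { decide := true }) [chrE, pdcE]
  · simp (config := { decide := true }) [chrE, pdcE]
  · simp (config := { decide := true }) [chrE, pdcE]
  · simp (config := { decide := true }) [chrE, pdcE]
  · show deriv (fun s => chrE C₂ C₃ s θ 3 3 0) t = pdcE C₂ C₃ t θ 0 3 3 0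
    rw [show (fun s => chrE C₂ C₃ s θ 3 3 0) = (fun s => s⁻¹) from
        funext fun s => by simp (config := { decide := true }) [chrE]]
    have h := hasDerivAt_inv hne
    rw [h.deriv]
    simp (config := { decide := true }) [pdcE]
    all_goals ring
  · simp (config := { decide := true }) [chrE, pdcE]
  · simp (config := { decide := true }) [chrE, pdcE]
  · simp (config := { decide := true }) [chrE, pdcE]

set_option maxHeartbeats 2000000 in
lemma deriv_chrE_θ (t θ : ℝ) (hs : Real.sin θ ≠ 0) (a q r : Fin 4) :
    deriv (fun s => chrE C₂ C₃ t s a q r) θ = pdcE C₂ C₃ t θ 2 a q r := by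
  fin_cases a <;> fin_cases q <;> fin_cases r
  · simp (config := { decide := true }) [chrE, pdcE]
  · simp (config := { decide := true }) [chrE, pdcE]
  · simp (config := { decide := true }) [chrE, pdcE]
  · simp (config := { decide := true }) [chrE, pdcE]
  · simp (config := { decide := true }) [chrE, pdcE]
  · simp (config := { decide := true }) [chrE, pdcE]
  · simp (config := { decide := true }) [chrE, pdcE]
  · simp (config := { decide := true }) [chrE, pdcE]
  · simp (config := { decide := true }) [chrE, pdcE]
  · simp (config := { decide := true }) [chrE, pdcE]
  · simp (config := { decide := true }) [chrE, pdcE]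
  · simp (config := { decide := true }) [chrE, pdcE]
  · simp (config := { decide := true }) [chrE, pdcE]
  · simp (config := { decide := true }) [chrE, pdcE]
  · simp (config := { decide := true }) [chrE, pdcE]
  · show deriv (fun s => chrE C₂ C₃ t s 0 3 3) θ = pdcE C₂ C₃ t θ 2 0 3 3
    rw [show (fun s => chrE C₂ C₃ t s 0 3 3) = (fun s => t * Pf C₂ C₃ t * Real.sin s^2) from
        funext fun s => by simp (config := { decide := true }) [chrE]]
    have h := ((Real.hasDerivAt_sin θ).pow 2).const_mul (t * Pf C₂ C₃ t)
    rw [show deriv (fun s => t * Pf C₂ C₃ t * Real.sin s^2) θ = _ from h.deriv]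
    simp (config := { decide := true }) [pdcE]
    all_goals ring
  · simp (config := { decide := true }) [chrE, pdcE]
  · simp (config := { decide := true }) [chrE, pdcE]
  · simp (config := { decide := true }) [chrE, pdcE]
  · simp (config := { decide := true }) [chrE, pdcE]
  · simp (config := { decide := true }) [chrE, pdcE]
  · simp (config := { decide := true }) [chrE, pdcE]
  · simp (config := { decide := true }) [chrE, pdcE]
  · simp (config := { decide := true }) [chrE, pdcE]
  · simp (config := { decide := true }) [chrE, pdcE]
  · simp (config := { decide := true }) [chrE, pdcE]
  · simp (config := { decide := true }) [chrE, pdcE]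
  · simp (config := { decide := true }) [chrE, pdcE]
  · simp (config := { decide := true }) [chrE, pdcE]
  · simp (config := { decide := true }) [chrE, pdcE]
  · simp (config := { decide := true }) [chrE, pdcE]
  · simp (config := { decide := true }) [chrE, pdcE]
  · simp (config := { decide := true }) [chrE, pdcE]
  · simp (config := { decide := true }) [chrE, pdcE]
  · simp (config := { decide := true }) [chrE, pdcE]
  · simp (config := { decide := true }) [chrE, pdcE]
  · simp (config := { decide := true }) [chrE, pdcE]
  · simp (config := { decide := true }) [chrE, pdcE]
  · simp (config := { decide := true }) [chrE, pdcE]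
  · simp (config := { decide := true }) [chrE, pdcE]
  · simp (config := { decide := true }) [chrE, pdcE]
  · simp (config := { decide := true }) [chrE, pdcE]
  · simp (config := { decide := true }) [chrE, pdcE]
  · simp (config := { decide := true }) [chrE, pdcE]
  · simp (config := { decide := true }) [chrE, pdcE]
  · simp (config := { decide := true }) [chrE, pdcE]
  · simp (config := { decide := true }) [chrE, pdcE]
  · show deriv (fun s => chrE C₂ C₃ t s 2 3 3) θ = pdcE C₂ C₃ t θ 2 2 3 3
    rw [show (fun s => chrE C₂ C₃ t s 2 3 3) = (fun s => -(Real.sin s * Real.cos s)) from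
        funext fun s => by simp (config := { decide := true }) [chrE]]
    have h := ((Real.hasDerivAt_sin θ).mul (Real.hasDerivAt_cos θ)).neg
    rw [show deriv (fun s => -(Real.sin s * Real.cos s)) θ = _ from h.deriv]
    simp (config := { decide := true }) [pdcE]
    all_goals ring
  · simp (config := { decide := true }) [chrE, pdcE]
  · simp (config := { decide := true }) [chrE, pdcE]
  · simp (config := { decide := true }) [chrE, pdcE]
  · simp (config := { decide := true }) [chrE, pdcE]
  · simp (config := { decide := true }) [chrE, pdcE]
  · simp (config := { decide := true }) [chrE, pdcE]
  · simp (config := { decide := true }) [chrE, pdcE]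
  · simp (config := { decide := true }) [chrE, pdcE]
  · simp (config := { decide := true }) [chrE, pdcE]
  · simp (config := { decide := true }) [chrE, pdcE]
  · simp (config := { decide := true }) [chrE, pdcE]
  · show deriv (fun s => chrE C₂ C₃ t s 3 2 3) θ = pdcE C₂ C₃ t θ 2 3 2 3
    rw [show (fun s => chrE C₂ C₃ t s 3 2 3) = (fun s => Real.cos s / Real.sin s) from
        funext fun s => by simp (config := { decide := true }) [chrE]]
    have h := (Real.hasDerivAt_cos θ).div (Real.hasDerivAt_sin θ) hs
    rw [show deriv (fun s => Real.cos s / Real.sin s) θ = _ from h.deriv]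
    simp (config := { decide := true }) [pdcE]
    all_goals ring
  · simp (config := { decide := true }) [chrE, pdcE]
  · simp (config := { decide := true }) [chrE, pdcE]
  · show deriv (fun s => chrE C₂ C₃ t s 3 3 2) θ = pdcE C₂ C₃ t θ 2 3 3 2
    rw [show (fun s => chrE C₂ C₃ t s 3 3 2) = (fun s => Real.cos s / Real.sin s) from
        funext fun s => by simp (config := { decide := true }) [chrE]]
    have h := (Real.hasDerivAt_cos θ).div (Real.hasDerivAt_sin θ) hs
    rw [show deriv (fun s => Real.cos s / Real.sin s) θ = _ from h.deriv]
    simp (config := { decide := true }) [pdcE]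
    all_goals ring
  · simp (config := { decide := true }) [chrE, pdcE]

end IBH5
namespace IBH6
open IBH IBH2 IBH3 IBH4 IBH5
variable (C₂ C₃ : ℝ)
local notation "ξ" => (fun t => C₂ * t ^ 2 + C₃ * t ^ 3)

set_option maxHeartbeats 1000000 in
lemma pd_chr (x : Pt) (ht : 0 < x 0) (hP : Pf C₂ C₃ (x 0) ≠ 0)
    (hs : Real.sin (x 2) ≠ 0) (i a q r : Fin 4) :
    pd i (fun y => Chr ξ y a q r) x = pdcE C₂ C₃ (x 0) (x 2) i a q r := by
  have hev : pd i (fun y => Chr ξ y a q r) x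
      = pd i (fun y => chrE C₂ C₃ (y 0) (y 2) a q r) x := by
    unfold pd
    apply Filter.EventuallyEq.deriv_eq
    fin_cases i
    · filter_upwards [eventually_gt_nhds ht,
        (hasDerivAt_Pf C₂ C₃ (x 0)).continuousAt.eventually_ne hP] with s h1 h2
      exact chr_eq C₂ C₃ _ (by simpa using h1) (by simpa using h2)
        (by simpa [Function.update_apply] using hs) a q r
    · exact Filter.Eventually.of_forall fun s => chr_eq C₂ C₃ _
        (by simpa [Function.update_apply] using ht)
        (by simpa [Function.update_apply] using hP)
        (by simpa [Function.update_apply] using hs) a q r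
    · filter_upwards [Real.continuous_sin.continuousAt.eventually_ne hs] with s h1
      exact chr_eq C₂ C₃ _ (by simpa [Function.update_apply] using ht)
        (by simpa [Function.update_apply] using hP) (by simpa using h1) a q r
    · exact Filter.Eventually.of_forall fun s => chr_eq C₂ C₃ _
        (by simpa [Function.update_apply] using ht)
        (by simpa [Function.update_apply] using hP)
        (by simpa [Function.update_apply] using hs) a q r
  rw [hev]
  fin_cases i
  · show deriv (fun s => chrE C₂ C₃ (Function.update x 0 s 0)
        (Function.update x 0 s 2) a q r) (x 0) = pdcE C₂ C₃ (x 0) (x 2) 0 a q r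
    rw [show (fun s => chrE C₂ C₃ (Function.update x 0 s 0)
        (Function.update x 0 s 2) a q r) = fun s => chrE C₂ C₃ s (x 2) a q r from
      funext fun s => by simp [Function.update_apply]]
    exact deriv_chrE_t C₂ C₃ (x 0) (x 2) (ne_of_gt ht) hP a q r
  · show deriv (fun s => chrE C₂ C₃ (Function.update x 1 s 0)
        (Function.update x 1 s 2) a q r) (x 1) = pdcE C₂ C₃ (x 0) (x 2) 1 a q r
    rw [show (fun s => chrE C₂ C₃ (Function.update x 1 s 0)
        (Function.update x 1 s 2) a q r)
        = fun _ => chrE C₂ C₃ (x 0) (x 2) a q r from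
      funext fun s => by simp [Function.update_apply]]
    simp (config := { decide := true }) [pdcE]
  · show deriv (fun s => chrE C₂ C₃ (Function.update x 2 s 0)
        (Function.update x 2 s 2) a q r) (x 2) = pdcE C₂ C₃ (x 0) (x 2) 2 a q r
    rw [show (fun s => chrE C₂ C₃ (Function.update x 2 s 0)
        (Function.update x 2 s 2) a q r) = fun s => chrE C₂ C₃ (x 0) s a q r from
      funext fun s => by simp [Function.update_apply]]
    exact deriv_chrE_θ C₂ C₃ (x 0) (x 2) hs a q r
  · show deriv (fun s => chrE C₂ C₃ (Function.update x 3 s 0)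
        (Function.update x 3 s 2) a q r) (x 3) = pdcE C₂ C₃ (x 0) (x 2) 3 a q r
    rw [show (fun s => chrE C₂ C₃ (Function.update x 3 s 0)
        (Function.update x 3 s 2) a q r)
        = fun _ => chrE C₂ C₃ (x 0) (x 2) a q r from
      funext fun s => by simp [Function.update_apply]]
    simp (config := { decide := true }) [pdcE]

end IBH6
namespace IBH7
open IBH IBH2 IBH3 IBH4 IBH5 IBH6
variable (C₂ C₃ : ℝ)
local notation "ξ" => (fun t => C₂ * t ^ 2 + C₃ * t ^ 3)

/-- explicit Riemann (1,3) tensor -/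
def riemE (C₂ C₃ t θ : ℝ) (a q r s : Fin 4) : ℝ :=
  if a = 0 ∧ q = 1 ∧ r = 0 ∧ s = 1 then -(2*C₃*Pf C₂ C₃ t)
  else if a = 0 ∧ q = 1 ∧ r = 1 ∧ s = 0 then 2*C₃*Pf C₂ C₃ t
  else if a = 0 ∧ q = 2 ∧ r = 0 ∧ s = 2 then -(t*Pd C₂ C₃ t)/2
  else if a = 0 ∧ q = 2 ∧ r = 2 ∧ s = 0 then t*Pd C₂ C₃ t/2
  else if a = 0 ∧ q = 3 ∧ r = 0 ∧ s = 3 then -(t*Pd C₂ C₃ t)*Real.sin θ^2/2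
  else if a = 0 ∧ q = 3 ∧ r = 3 ∧ s = 0 then t*Pd C₂ C₃ t*Real.sin θ^2/2
  else if a = 1 ∧ q = 0 ∧ r = 0 ∧ s = 1 then -(2*C₃/Pf C₂ C₃ t)
  else if a = 1 ∧ q = 0 ∧ r = 1 ∧ s = 0 then 2*C₃/Pf C₂ C₃ t
  else if a = 1 ∧ q = 2 ∧ r = 1 ∧ s = 2 then -(t*Pd C₂ C₃ t)/2
  else if a = 1 ∧ q = 2 ∧ r = 2 ∧ s = 1 then t*Pd C₂ C₃ t/2
  else if a = 1 ∧ q = 3 ∧ r = 1 ∧ s = 3 then -(t*Pd C₂ C₃ t)*Real.sin θ^2/2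
  else if a = 1 ∧ q = 3 ∧ r = 3 ∧ s = 1 then t*Pd C₂ C₃ t*Real.sin θ^2/2
  else if a = 2 ∧ q = 0 ∧ r = 0 ∧ s = 2 then -(Pd C₂ C₃ t/(2*t*Pf C₂ C₃ t))
  else if a = 2 ∧ q = 0 ∧ r = 2 ∧ s = 0 then Pd C₂ C₃ t/(2*t*Pf C₂ C₃ t)
  else if a = 2 ∧ q = 1 ∧ r = 1 ∧ s = 2 then Pf C₂ C₃ t*Pd C₂ C₃ t/(2*t)
  else if a = 2 ∧ q = 1 ∧ r = 2 ∧ s = 1 then -(Pf C₂ C₃ t*Pd C₂ C₃ t/(2*t))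
  else if a = 2 ∧ q = 3 ∧ r = 2 ∧ s = 3 then -((1+Pf C₂ C₃ t)*Real.sin θ^2)
  else if a = 2 ∧ q = 3 ∧ r = 3 ∧ s = 2 then (1+Pf C₂ C₃ t)*Real.sin θ^2
  else if a = 3 ∧ q = 0 ∧ r = 0 ∧ s = 3 then -(Pd C₂ C₃ t/(2*t*Pf C₂ C₃ t))
  else if a = 3 ∧ q = 0 ∧ r = 3 ∧ s = 0 then Pd C₂ C₃ t/(2*t*Pf C₂ C₃ t)
  else if a = 3 ∧ q = 1 ∧ r = 1 ∧ s = 3 then Pf C₂ C₃ t*Pd C₂ C₃ t/(2*t)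
  else if a = 3 ∧ q = 1 ∧ r = 3 ∧ s = 1 then -(Pf C₂ C₃ t*Pd C₂ C₃ t/(2*t))
  else if a = 3 ∧ q = 2 ∧ r = 2 ∧ s = 3 then 1+Pf C₂ C₃ t
  else if a = 3 ∧ q = 2 ∧ r = 3 ∧ s = 2 then -(1+Pf C₂ C₃ t)
  else 0

set_option maxHeartbeats 4000000 in
lemma riem_eq (x : Pt) (ht : 0 < x 0) (hP : Pf C₂ C₃ (x 0) ≠ 0)
    (hs : Real.sin (x 2) ≠ 0) (a q r s : Fin 4) :
    Riem13 ξ x a q r s = riemE C₂ C₃ (x 0) (x 2) a q r s := by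
  have hne : x 0 ≠ 0 := ne_of_gt ht
  have hc2 : Real.cos (x 2)^2 = 1 - Real.sin (x 2)^2 := Real.cos_sq' (x 2)
  unfold Riem13
  rw [Fin.sum_univ_four]
  simp only [pd_chr C₂ C₃ x ht hP hs, chr_eq C₂ C₃ x ht hP hs]
  fin_cases a <;> fin_cases q <;> fin_cases r <;> fin_cases s <;>
    (simp (config := { decide := true }) [pdcE, chrE, riemE]
     try field_simp
     try ring_nf
     try simp only [hc2]
     try ring_nf)
end IBH7
namespace IBH8
open IBH IBH2 IBH3 IBH4 IBH5 IBH6 IBH7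
variable (C₂ C₃ : ℝ)
local notation "ξ" => (fun t => C₂ * t ^ 2 + C₃ * t ^ 3)

/-- explicit Ricci tensor -/
def ricE (C₂ C₃ t θ : ℝ) (i j : Fin 4) : ℝ :=
  if i = 0 ∧ j = 0 then 2*C₃/Pf C₂ C₃ t + Pd C₂ C₃ t/(t*Pf C₂ C₃ t)
  else if i = 1 ∧ j = 1 then -(2*C₃*Pf C₂ C₃ t) - Pf C₂ C₃ t*Pd C₂ C₃ t/t
  else if i = 2 ∧ j = 2 then -(t*Pd C₂ C₃ t) - (1+Pf C₂ C₃ t)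
  else if i = 3 ∧ j = 3 then (-(t*Pd C₂ C₃ t) - (1+Pf C₂ C₃ t))*Real.sin θ^2
  else 0

set_option maxHeartbeats 1000000 in
lemma ric_eq (x : Pt) (ht : 0 < x 0) (hP : Pf C₂ C₃ (x 0) ≠ 0)
    (hs : Real.sin (x 2) ≠ 0) (i j : Fin 4) :
    Ric ξ x i j = ricE C₂ C₃ (x 0) (x 2) i j := by
  have hne : x 0 ≠ 0 := ne_of_gt ht
  unfold Ric
  rw [Fin.sum_univ_four]
  simp only [riem_eq C₂ C₃ x ht hP hs]
  fin_cases i <;> fin_cases j <;>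
    (simp (config := { decide := true }) [riemE, ricE]
     try field_simp
     try ring_nf)

set_option maxHeartbeats 1000000 in
lemma scal_eq (x : Pt) (ht : 0 < x 0) (hP : Pf C₂ C₃ (x 0) ≠ 0)
    (hs : Real.sin (x 2) ≠ 0) :
    scal ξ x = -(4*C₃) - 4*Pd C₂ C₃ (x 0)/(x 0)
      - 2*(1+Pf C₂ C₃ (x 0))/(x 0)^2 := by
  have hne : x 0 ≠ 0 := ne_of_gt ht
  unfold scal
  simp only [Fin.sum_univ_four, gInv_eq C₂ C₃ x ht hP hs,
    ric_eq C₂ C₃ x ht hP hs]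
  simp (config := { decide := true }) [gIE, ricE]
  field_simp
  ring

set_option maxHeartbeats 4000000 in
lemma weyl_zero (x : Pt) (ht : 0 < x 0) (hP : Pf C₂ C₃ (x 0) ≠ 0)
    (hs : Real.sin (x 2) ≠ 0) (a b c d : Fin 4) :
    Weyl04 ξ x a b c d = 0 := by
  have hne : x 0 ≠ 0 := ne_of_gt ht
  have hc2 : Real.cos (x 2)^2 = 1 - Real.sin (x 2)^2 := Real.cos_sq' (x 2)
  unfold Weyl04 Riem04 KN
  rw [Fin.sum_univ_four, scal_eq C₂ C₃ x ht hP hs]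
  simp only [riem_eq C₂ C₃ x ht hP hs, ric_eq C₂ C₃ x ht hP hs,
    gM_eq_s10 C₂ C₃ x hne]
  fin_cases a <;> fin_cases b <;> fin_cases c <;> fin_cases d <;>
    (simp (config := { decide := true }) [riemE, ricE]
     try field_simp
     try ring_nf
     try simp only [hc2]
     try ring_nf
     try simp only [Pf, Pd]
     try ring)

end IBH8

open IBH IBH2 IBH3 IBH4 IBH5 IBH6 IBH7 IBH8 in
/-- if `ξ(t) = C₂t² + C₃t³` then `C · T = 0` in the IBH
spacetime. -/
theorem ibh_weyl_annihilates_emt (C₂ C₃ : ℝ) (x : Pt)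
    (hx : Dom (fun t => C₂ * t ^ 2 + C₃ * t ^ 3) x) :
    ∀ a b e f : Fin 4,
      dot2 (Weyl13 (fun t => C₂ * t ^ 2 + C₃ * t ^ 3) x)
        (EnT (fun t => C₂ * t ^ 2 + C₃ * t ^ 3) x) a b e f = 0 := by
  intro a b e f
  unfold Dom at hx
  obtain ⟨ht, hxe, hs⟩ := hx
  have hne : x 0 ≠ 0 := ne_of_gt ht
  have hP : Pf C₂ C₃ (x 0) ≠ 0 := by
    intro h
    apply hxe
    show x 0 = 2 * (C₂ * (x 0) ^ 2 + C₃ * (x 0) ^ 3)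
    have h2 : x 0 * Pf C₂ C₃ (x 0)
        = 2 * (C₂ * (x 0) ^ 2 + C₃ * (x 0) ^ 3) - x 0 := by
      unfold Pf; ring
    rw [h, mul_zero] at h2
    linarith
  have hW : ∀ p q r s : Fin 4,
      Weyl13 (fun t => C₂ * t ^ 2 + C₃ * t ^ 3) x p q r s = 0 := by
    intro p q r s
    unfold Weyl13
    rw [Fin.sum_univ_four]
    simp [weyl_zero C₂ C₃ x ht hP hs]
  unfold dot2
  rw [Fin.sum_univ_four]
  simp [hW]
end
end

section
/- For the non-Killing vector field X = (1 - 2ξ/t) ∂/∂t on the interior black hole spacetime, the nonzero components of £_X g are (£_X g)_{11} = 2(ξ - tξ')/(t(t - 2ξ)), (£_X g)_{22} = -2(ξ - tξ')(t - 2ξ)/t³, (£_X g)_{33} = 2(t - 2ξ), and (£_X g)_{44} = 2(t - 2ξ) sin²θ. -/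
noncomputable section
open Real

/-- components of `£_X g` for `X = (1 - 2ξ/t) ∂/∂t`. -/
theorem ibh_lie_derivative_metric (ξ : ℝ → ℝ) (hξ : ContDiff ℝ (⊤ : ℕ∞) ξ) (x : Pt)
    (hx : Dom ξ x) :
    LieG ξ (fun y a => if a = 0 then 1 - 2 * ξ (y 0) / y 0 else 0) x 0 0 =
        2 * (ξ (x 0) - x 0 * deriv ξ (x 0)) / (x 0 * (x 0 - 2 * ξ (x 0))) ∧
    LieG ξ (fun y a => if a = 0 then 1 - 2 * ξ (y 0) / y 0 else 0) x 1 1 =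
        -(2 * (ξ (x 0) - x 0 * deriv ξ (x 0)) * (x 0 - 2 * ξ (x 0))) / (x 0) ^ 3 ∧
    LieG ξ (fun y a => if a = 0 then 1 - 2 * ξ (y 0) / y 0 else 0) x 2 2 =
        2 * (x 0 - 2 * ξ (x 0)) ∧
    LieG ξ (fun y a => if a = 0 then 1 - 2 * ξ (y 0) / y 0 else 0) x 3 3 =
        2 * (x 0 - 2 * ξ (x 0)) * Real.sin (x 2) ^ 2 ∧
    (∀ b c : Fin 4, b ≠ c →
      LieG ξ (fun y a => if a = 0 then 1 - 2 * ξ (y 0) / y 0 else 0) x b c = 0) := by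
  obtain ⟨ht0, htne, hs⟩ := hx
  have ht0' : x 0 ≠ 0 := ne_of_gt ht0
  have htsub : x 0 - 2 * ξ (x 0) ≠ 0 := sub_ne_zero_of_ne htne
  have hdξ : HasDerivAt ξ (deriv ξ (x 0)) (x 0) :=
    ((hξ.differentiable (by simp)) (x 0)).hasDerivAt
  have hf : HasDerivAt (fun s => 2 * ξ s / s - 1)
      ((2 * deriv ξ (x 0) * x 0 - 2 * ξ (x 0) * 1) / (x 0) ^ 2) (x 0) :=
    ((hdξ.const_mul 2).div (hasDerivAt_id (x 0)) ht0').sub_const 1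
  set f' : ℝ := (2 * deriv ξ (x 0) * x 0 - 2 * ξ (x 0) * 1) / (x 0) ^ 2 with hf'def
  have hne : 2 * ξ (x 0) / (x 0) - 1 ≠ 0 := by
    intro h
    apply htne
    field_simp at h
    linarith
  have hne2 : 2 * ξ (x 0) - x 0 ≠ 0 := fun h => htne (by linarith)
  -- pd of the diagonal metric components in direction 0
  have h00 : pd 0 (fun y => gM ξ y 0 0) x = f' / (2 * ξ (x 0) / x 0 - 1) ^ 2 := by
    have e : (fun s => gM ξ (Function.update x 0 s) 0 0)
        = fun s => -(2 * ξ s / s - 1)⁻¹ := by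
      funext s; simp [gM, Function.update_apply]
    have hd : HasDerivAt (fun s => -(2 * ξ s / s - 1)⁻¹)
        (-(-f' / (2 * ξ (x 0) / x 0 - 1) ^ 2)) (x 0) := (hf.inv hne).neg
    rw [pd, e, hd.deriv]
    ring
  have h11 : pd 0 (fun y => gM ξ y 1 1) x = f' := by
    have e : (fun s => gM ξ (Function.update x 0 s) 1 1)
        = fun s => 2 * ξ s / s - 1 := by
      funext s; simp [gM, Function.update_apply]
    rw [pd, e, hf.deriv]
  have h22 : pd 0 (fun y => gM ξ y 2 2) x = 2 * x 0 := by
    have e : (fun s => gM ξ (Function.update x 0 s) 2 2) = fun s => s ^ 2 := by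
      funext s; simp [gM, Function.update_apply]
    rw [pd, e]
    simp [deriv_pow]
  have h33 : pd 0 (fun y => gM ξ y 3 3) x = 2 * x 0 * Real.sin (x 2) ^ 2 := by
    have e : (fun s => gM ξ (Function.update x 0 s) 3 3)
        = fun s => s ^ 2 * Real.sin (x 2) ^ 2 := by
      funext s; simp [gM, Function.update_apply]
    rw [pd, e]
    have : HasDerivAt (fun s : ℝ => s ^ 2 * Real.sin (x 2) ^ 2)
        (2 * x 0 * Real.sin (x 2) ^ 2) (x 0) := by
      simpa [mul_comm, mul_assoc] using
        ((hasDerivAt_pow 2 (x 0)).mul_const (Real.sin (x 2) ^ 2))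
    exact this.deriv
  -- pd of the vector field component
  have hX0 : pd 0 (fun y => 1 - 2 * ξ (y 0) / y 0) x = -f' := by
    rw [pd]
    simp only [Function.update_self]
    rw [show (fun s => 1 - 2 * ξ s / s) = fun s => -(2 * ξ s / s - 1) from by
      funext s; ring]
    exact hf.neg.deriv
  have hXc : ∀ i : Fin 4, i ≠ 0 → pd i (fun y => 1 - 2 * ξ (y 0) / y 0) x = 0 := by
    intro i hi
    rw [pd]
    rw [show (fun s => 1 - 2 * ξ (Function.update x i s 0) / Function.update x i s 0)
        = fun _ => 1 - 2 * ξ (x 0) / x 0 by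
      funext s; rw [Function.update_of_ne (Ne.symm hi)]]
    simp
  have hz : ∀ (i : Fin 4) (c : ℝ), pd i (fun _ => c) x = 0 := by
    intro i c; simp [pd]
  have hod : ∀ (i b c : Fin 4), b ≠ c → pd i (fun y => gM ξ y b c) x = 0 := by
    intro i b c hbc
    rw [show (fun y => gM ξ y b c) = fun _ => (0 : ℝ) by
      funext y; simp [gM, hbc]]
    exact hz i 0
  have g00 : gM ξ x 0 0 = -(2 * ξ (x 0) / x 0 - 1)⁻¹ := by simp [gM]
  have g11 : gM ξ x 1 1 = 2 * ξ (x 0) / x 0 - 1 := by simp [gM]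
  have g22 : gM ξ x 2 2 = (x 0) ^ 2 := by simp [gM]
  have g33 : gM ξ x 3 3 = (x 0) ^ 2 * Real.sin (x 2) ^ 2 := by simp [gM]
  refine ⟨?_, ?_, ?_, ?_, ?_⟩
  · simp only [LieG, Fin.sum_univ_four]
    norm_num
    rw [h00, hX0, g00]
    simp [hz]
    rw [hf'def]
    field_simp [ht0', hne, hne2, htsub]
    ring
  · simp only [LieG, Fin.sum_univ_four]
    norm_num
    rw [h11]
    simp [hz, gM, hXc]
    rw [hf'def]
    field_simp [ht0', hne, hne2, htsub]
    ring
  · simp only [LieG, Fin.sum_univ_four]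
    norm_num
    rw [h22]
    simp [hz, gM, hXc]
    field_simp [ht0', hne, hne2, htsub]
  · simp only [LieG, Fin.sum_univ_four]
    norm_num
    rw [h33]
    simp [hz, gM, hXc]
    field_simp [ht0', hne, hne2, htsub]
  · intro b c hbc
    fin_cases b <;> fin_cases c <;>
      first
        | exact absurd rfl hbc
        | (simp only [LieG, Fin.sum_univ_four]
           norm_num
           simp [hz, hod, hXc, gM, g00])
end
end
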